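/- arXiv:2008.13491 — 11 statements merged into one kernel-verified Lean document; each statement's English description precedes it below -/
import Mathlib

section
/- If G is a GP4-graph obtained from a connected graph H with vertex set {v_1,...,v_n} by adding, for each i, a path w_i, x_i, y_i, z_i attached to v_i (with edges v_i w_i, w_i x_i, x_i y_i, y_i z_i), then the semipaired domination number of G equals (2/5)|V(G)|, i.e. γ_{pr2}(G) = 2n. -/
open SimpleGraph Finset

/-- `D` is a dominating set of `G`. -/
def Dominating {V : Type*} (G : SimpleGraph V) (D : Finset V) : Prop :=
  ∀ v : V, ∃ u ∈ D, u = v ∨ G.Adj u v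

/-- `D` is a semipaired dominating set of `G`: a dominating set whose vertices can be
partitioned into pairs (via a fixed-point-free involution) at distance at most 2. -/
def SemiPairedDom {V : Type*} (G : SimpleGraph V) (D : Finset V) : Prop :=
  Dominating G D ∧ ∃ f : V → V,
    (∀ u ∈ D, f u ∈ D) ∧ (∀ u ∈ D, f (f u) = u) ∧ (∀ u ∈ D, f u ≠ u) ∧
    (∀ u ∈ D, G.Adj u (f u) ∨ ∃ w, G.Adj u w ∧ G.Adj w (f u))

/-- `D` is a paired dominating set of `G`: a dominating set whose induced subgraph has a
perfect matching (encoded by a fixed-point-free involution pairing adjacent vertices). -/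
def PairedDom {V : Type*} (G : SimpleGraph V) (D : Finset V) : Prop :=
  Dominating G D ∧ ∃ f : V → V,
    (∀ u ∈ D, f u ∈ D) ∧ (∀ u ∈ D, f (f u) = u) ∧ (∀ u ∈ D, f u ≠ u) ∧
    (∀ u ∈ D, G.Adj u (f u))

/-- The domination number. -/
noncomputable def domNum (V : Type*) [Fintype V] (G : SimpleGraph V) : ℕ :=
  sInf {k : ℕ | ∃ D : Finset V, Dominating G D ∧ D.card = k}

/-- The semipaired domination number. -/
noncomputable def semiPairedDomNum (V : Type*) [Fintype V] (G : SimpleGraph V) : ℕ :=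
  sInf {k : ℕ | ∃ D : Finset V, SemiPairedDom G D ∧ D.card = k}

/-- The paired domination number. -/
noncomputable def pairedDomNum (V : Type*) [Fintype V] (G : SimpleGraph V) : ℕ :=
  sInf {k : ℕ | ∃ D : Finset V, PairedDom G D ∧ D.card = k}

/-- The GP4-graph obtained from `H` by attaching to each vertex `a` a path
`a – w_a – x_a – y_a – z_a`, where `w_a, x_a, y_a, z_a` are the vertices
`Sum.inr (a, 0), …, Sum.inr (a, 3)`. -/
def GP4 {α : Type*} (H : SimpleGraph α) : SimpleGraph (α ⊕ α × Fin 4) :=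
  SimpleGraph.fromRel (fun u v =>
    (∃ a b, u = Sum.inl a ∧ v = Sum.inl b ∧ H.Adj a b) ∨
    (∃ a, u = Sum.inl a ∧ v = Sum.inr (a, 0)) ∨
    (∃ (a : α) (j k : Fin 4), u = Sum.inr (a, j) ∧ v = Sum.inr (a, k) ∧ (k : ℕ) = (j : ℕ) + 1))

/-!
Each pendant path `w_a x_a y_a z_a` must contain two vertices of a semipaired dominating set:
`z_a` is dominated by `y_a` or `z_a`, and every vertex within distance two of these lies on the
same path, so the partner does too. Conversely `{w_a, y_a}`, with `w_a` paired to `y_a` through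
`x_a`, is a semipaired dominating set.
-/

namespace GP4

variable {α : Type*} (H : SimpleGraph α)

def base : α ⊕ α × Fin 4 → α := Sum.elim id Prod.fst

lemma adj_inl_inr (a : α) : (GP4 H).Adj (Sum.inl a) (Sum.inr (a, 0)) := by
  simp [GP4]

lemma adj_inr_inr {a : α} {j k : Fin 4} (h : (k : ℕ) = j + 1) :
    (GP4 H).Adj (Sum.inr (a, j)) (Sum.inr (a, k)) := by
  grind [GP4, fromRel_adj]

lemma exists_eq_inr_of_adj {u : α ⊕ α × Fin 4} {a : α} {j : Fin 4} (hj : 1 ≤ (j : ℕ))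
    (h : (GP4 H).Adj u (Sum.inr (a, j))) : ∃ k : Fin 4, u = Sum.inr (a, k) ∧ (j : ℕ) ≤ k + 1 := by
  rw [GP4, fromRel_adj] at h
  grind

lemma base_eq_of_adj {u : α ⊕ α × Fin 4} {a : α} {j : Fin 4} (hj : 1 ≤ (j : ℕ))
    (h : (GP4 H).Adj u (Sum.inr (a, j))) : base u = a := by
  obtain ⟨k, rfl, -⟩ := exists_eq_inr_of_adj H hj h
  rfl

lemma base_eq_of_dist_le_two {a : α} {t : Fin 4} (ht : 2 ≤ (t : ℕ)) {v : α ⊕ α × Fin 4}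
    (h : (GP4 H).Adj (Sum.inr (a, t)) v ∨ ∃ w, (GP4 H).Adj (Sum.inr (a, t)) w ∧ (GP4 H).Adj w v) :
    base v = a := by
  rcases h with h | ⟨w, hw, hv⟩
  · exact base_eq_of_adj H (by omega) h.symm
  · obtain ⟨k, rfl, hk⟩ := exists_eq_inr_of_adj H (by omega) hw.symm
    exact base_eq_of_adj H (by omega) hv.symm

lemma two_le_card_filter_base [DecidableEq α] {D : Finset (α ⊕ α × Fin 4)}
    (hD : SemiPairedDom (GP4 H) D) (a : α) : 2 ≤ #{u ∈ D | base u = a} := by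
  obtain ⟨hdom, f, hfD, -, hfne, hfdist⟩ := hD
  obtain ⟨u, huD, hu⟩ := hdom (Sum.inr (a, 3))
  obtain ⟨t, rfl, ht⟩ : ∃ t : Fin 4, u = Sum.inr (a, t) ∧ 2 ≤ (t : ℕ) := by
    rcases hu with rfl | hu
    · exact ⟨3, rfl, by decide⟩
    · obtain ⟨k, rfl, hk⟩ := exists_eq_inr_of_adj H (by decide) hu
      exact ⟨k, rfl, by simpa using hk⟩
  refine one_lt_card.2 ⟨_, mem_filter.2 ⟨huD, rfl⟩, f (Sum.inr (a, t)), ?_, (hfne _ huD).symm⟩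
  exact mem_filter.2 ⟨hfD _ huD, base_eq_of_dist_le_two H ht (hfdist _ huD)⟩

lemma two_mul_card_le_card [Fintype α] {D : Finset (α ⊕ α × Fin 4)}
    (hD : SemiPairedDom (GP4 H) D) : 2 * Fintype.card α ≤ #D := by
  classical
  exact mul_card_image_le_card_of_maps_to (fun u _ => mem_univ (base u)) 2
    (fun a _ => two_le_card_filter_base H hD a)

variable (α) in
def wySet [Fintype α] : Finset (α ⊕ α × Fin 4) :=
  (univ ×ˢ {0, 2}).map Function.Embedding.inr

lemma card_wySet [Fintype α] : #(wySet α) = 2 * Fintype.card α := by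
  simp [wySet, mul_comm]

lemma inr_mem_wySet [Fintype α] {a : α} {j : Fin 4} :
    Sum.inr (a, j) ∈ wySet α ↔ j = 0 ∨ j = 2 := by
  simp [wySet]

lemma forall_mem_wySet [Fintype α] {p : α ⊕ α × Fin 4 → Prop} :
    (∀ u ∈ wySet α, p u) ↔ ∀ a, p (Sum.inr (a, 0)) ∧ p (Sum.inr (a, 2)) := by
  refine ⟨fun h a => ⟨h _ (inr_mem_wySet.2 (.inl rfl)), h _ (inr_mem_wySet.2 (.inr rfl))⟩, ?_⟩
  rintro h _ hu
  obtain ⟨⟨a, j⟩, hj, rfl⟩ := mem_map.1 hu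
  obtain rfl | rfl : j = 0 ∨ j = 2 := by simpa using hj
  exacts [(h a).1, (h a).2]

lemma semiPairedDom_wySet [Fintype α] : SemiPairedDom (GP4 H) (wySet α) := by
  refine ⟨?_, Sum.map id (Prod.map id (2 - ·)), ?_, ?_, ?_, ?_⟩
  · rintro (a | ⟨a, j⟩)
    · exact ⟨_, inr_mem_wySet.2 (.inl rfl), .inr (adj_inl_inr H a).symm⟩
    · fin_cases j
      · exact ⟨_, inr_mem_wySet.2 (.inl rfl), .inl rfl⟩
      · exact ⟨_, inr_mem_wySet.2 (.inl rfl), .inr (adj_inr_inr H rfl)⟩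
      · exact ⟨_, inr_mem_wySet.2 (.inr rfl), .inl rfl⟩
      · exact ⟨_, inr_mem_wySet.2 (.inr rfl), .inr (adj_inr_inr H rfl)⟩
  all_goals refine forall_mem_wySet.2 fun a => ?_
  · exact ⟨inr_mem_wySet.2 (.inr rfl), inr_mem_wySet.2 (.inl rfl)⟩
  · exact ⟨rfl, rfl⟩
  · simp
  · have h01 : (GP4 H).Adj (Sum.inr (a, 0)) (Sum.inr (a, 1)) := adj_inr_inr H rfl
    have h12 : (GP4 H).Adj (Sum.inr (a, 1)) (Sum.inr (a, 2)) := adj_inr_inr H rfl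
    exact ⟨.inr ⟨_, h01, h12⟩, .inr ⟨_, h12.symm, h01.symm⟩⟩

end GP4

theorem gp4_semiPairedDomNum_general {α : Type*} [Fintype α]
    (H : SimpleGraph α) :
    semiPairedDomNum (α ⊕ α × Fin 4) (GP4 H) = 2 * Fintype.card α :=
  le_antisymm (Nat.sInf_le ⟨_, GP4.semiPairedDom_wySet H, GP4.card_wySet⟩) <|
    le_csInf ⟨_, _, GP4.semiPairedDom_wySet H, rfl⟩ fun _ ⟨_, hD, hk⟩ =>
      hk ▸ GP4.two_mul_card_le_card H hD

/-- If `G` is the GP4-graph of a connected graph `H` with `n` vertices,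
then `γ_{pr2}(G) = 2n = (2/5)|V(G)|`. -/
theorem gp4_semiPairedDomNum {α : Type*} [Fintype α] [DecidableEq α]
    (H : SimpleGraph α) (hH : H.Connected) :
    semiPairedDomNum (α ⊕ α × Fin 4) (GP4 H) = 2 * Fintype.card α :=
  gp4_semiPairedDomNum_general H
end

section
/- Let G be a GP4-graph constructed from a connected graph H with n vertices. If H has a paired dominating set of cardinality at most k (with k ≤ n), then G has a paired dominating set of cardinality at most 2n + k. -/
open SimpleGraph Finset

/-!
Add to a paired dominating set `D` of `H` the middle pair `x_a, y_a` of every pendant path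
`a – w_a – x_a – y_a – z_a`. These pairs dominate their whole path and are matched to each
other, while `D` still dominates and is matched inside the copy of `H`; this costs `2n` vertices.
-/

section GP4

variable {α : Type*} {H : SimpleGraph α}

theorem gp4_adj_inl_inl {a b : α} : (GP4 H).Adj (.inl a) (.inl b) ↔ H.Adj a b := by
  simpa [GP4, H.adj_comm] using H.ne_of_adj

theorem gp4_adj_inr_inr (a : α) {j k : Fin 4} (h : (k : ℕ) = j + 1) :
    (GP4 H).Adj (.inr (a, j)) (.inr (a, k)) :=
  (fromRel_adj _ _ _).2 ⟨by simp [Fin.ext_iff]; omega, .inl (.inr (.inr ⟨a, j, k, rfl, rfl, h⟩))⟩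

variable [Fintype α]

-- `Sum.inr (a, 1)` and `Sum.inr (a, 2)` are `x_a` and `y_a`.
def gp4Extend (D : Finset α) : Finset (α ⊕ α × Fin 4) :=
  D.disjSum (univ ×ˢ {1, 2})

theorem card_gp4Extend (D : Finset α) :
    (gp4Extend D).card = D.card + 2 * Fintype.card α := by
  simp [gp4Extend, card_disjSum, card_product, mul_comm]

theorem dominating_gp4Extend {D : Finset α} (hD : Dominating H D) :
    Dominating (GP4 H) (gp4Extend D) := by
  rintro (a | ⟨a, j⟩)
  · obtain ⟨u, hu, rfl | hua⟩ := hD a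
    · exact ⟨.inl u, inl_mem_disjSum.2 hu, .inl rfl⟩
    · exact ⟨.inl u, inl_mem_disjSum.2 hu, .inr (gp4_adj_inl_inl.2 hua)⟩
  · have h1 : Sum.inr (a, 1) ∈ gp4Extend D := inr_mem_disjSum.2 (by simp)
    have h2 : Sum.inr (a, 2) ∈ gp4Extend D := inr_mem_disjSum.2 (by simp)
    fin_cases j
    · exact ⟨_, h1, .inr (gp4_adj_inr_inr a rfl).symm⟩
    · exact ⟨_, h1, .inl rfl⟩
    · exact ⟨_, h2, .inl rfl⟩
    · exact ⟨_, h2, .inr (gp4_adj_inr_inr a rfl)⟩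

theorem pairedDom_gp4Extend {D : Finset α} (hD : PairedDom H D) :
    PairedDom (GP4 H) (gp4Extend D) := by
  obtain ⟨hdom, f, hf_mem, hf_invol, hf_ne, hf_adj⟩ := hD
  refine ⟨dominating_gp4Extend hdom, Sum.map f (Prod.map id (Equiv.swap 1 2)), ?_, ?_, ?_, ?_⟩ <;>
  · rintro (a | ⟨a, j⟩) hu
    · rw [gp4Extend, inl_mem_disjSum] at hu
      simp [gp4Extend, hf_mem a hu, hf_invol a hu, hf_ne a hu, gp4_adj_inl_inl, hf_adj a hu]
    · simp only [gp4Extend, inr_mem_disjSum, mem_product, mem_univ, true_and, mem_insert,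
        mem_singleton] at hu
      rcases hu with rfl | rfl
      · simp [gp4Extend, gp4_adj_inr_inr a (j := 1) (k := 2) rfl]
      · simp [gp4Extend, (gp4_adj_inr_inr a (j := 1) (k := 2) rfl).symm]

end GP4

theorem gp4_pairedDom_of_pairedDom_general {α : Type*} [Fintype α]
    (H : SimpleGraph α)
    (k : ℕ)
    (h : ∃ D : Finset α, PairedDom H D ∧ D.card ≤ k) :
    ∃ D' : Finset (α ⊕ α × Fin 4),
      PairedDom (GP4 H) D' ∧ D'.card ≤ 2 * Fintype.card α + k := by
  obtain ⟨D, hD, hcard⟩ := h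
  refine ⟨gp4Extend D, pairedDom_gp4Extend hD, ?_⟩
  rw [card_gp4Extend]
  omega

/-- If `H` (connected, no isolated vertices, `n` vertices) has a paired
dominating set of size at most `k ≤ n`, then its GP4-graph has a paired dominating set
of size at most `2n + k`. -/
theorem gp4_pairedDom_of_pairedDom {α : Type*} [Fintype α] [DecidableEq α]
    (H : SimpleGraph α) (hH : H.Connected) (hiso : ∀ v : α, ∃ u : α, H.Adj u v)
    (k : ℕ) (hk : k ≤ Fintype.card α)
    (h : ∃ D : Finset α, PairedDom H D ∧ D.card ≤ k) :
    ∃ D' : Finset (α ⊕ α × Fin 4),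
      PairedDom (GP4 H) D' ∧ D'.card ≤ 2 * Fintype.card α + k :=
  gp4_pairedDom_of_pairedDom_general H k h
end

section
/- Let G be a GP4-graph constructed from a connected graph H with n vertices. If G has a paired dominating set of cardinality at most 2n + k (with k ≤ n), then H has a paired dominating set of cardinality at most k. -/
/-!
Let `D'` be a paired dominating set of `GP4 H` with pairing `f`. On every pendant path `y_a` lies
in `D'` (it or `z_a` dominates `z_a`, and `z_a` can only be paired with `y_a`), and so does its
partner, so each path carries at least two vertices of `D'`. Let `P` (`pairedHubs`) be the vertices
`a` of `H` with `a ∈ D'` paired with another vertex of `H`, and `T` (`heavy`) those with `a ∈ D'`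
paired with `w_a`, together with those not dominated by `D' ∩ V(H)`; for the latter
`w_a, x_a, y_a, z_a` are all forced into `D'`. Counting the vertices of `D'` in each gadget
`{a, w_a, x_a, y_a, z_a}` gives `|P| + 2|T| + 2n ≤ |D'|`. The pairing of `D'`
restricts to a pairing of `P` in `H`, `P ∪ T` dominates `H`, and pairing the vertices of `T`
greedily with fresh neighbours yields a paired dominating set of `H` of size at most `|P| + 2|T|`.
-/

open SimpleGraph Finset

structure IsPairing {V : Type*} (G : SimpleGraph V) (D : Finset V) (f : V → V) : Prop where
  map_mem : ∀ u ∈ D, f u ∈ D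
  apply_apply : ∀ u ∈ D, f (f u) = u
  apply_ne : ∀ u ∈ D, f u ≠ u
  adj : ∀ u ∈ D, G.Adj u (f u)

lemma pairedDom_iff {V : Type*} {G : SimpleGraph V} {D : Finset V} :
    PairedDom G D ↔ Dominating G D ∧ ∃ f, IsPairing G D f :=
  ⟨fun ⟨hD, f, h₁, h₂, h₃, h₄⟩ => ⟨hD, f, h₁, h₂, h₃, h₄⟩,
    fun ⟨hD, f, h₁, h₂, h₃, h₄⟩ => ⟨hD, f, h₁, h₂, h₃, h₄⟩⟩

namespace IsPairing

variable {V : Type*} [DecidableEq V] {G : SimpleGraph V} {D P : Finset V} {f g : V → V}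

lemma insert_insert (hf : IsPairing G D f) {a b : V} (hab : G.Adj a b) (ha : a ∉ D)
    (hb : b ∉ D) :
    IsPairing G (insert a (insert b D)) fun v => if v = a then b else if v = b then a else f v := by
  have hD : ∀ u ∈ D, (if u = a then b else if u = b then a else f u) = f u := fun u hu => by
    simp [ne_of_mem_of_not_mem hu ha, ne_of_mem_of_not_mem hu hb]
  refine ⟨?_, ?_, ?_, ?_⟩ <;> simp only [forall_mem_insert] <;>
    refine ⟨by simp [hab, hab.ne.symm], by simp [hab.symm, hab.ne, hab.ne.symm], fun u hu => ?_⟩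
  · simp [hD u hu, hf.map_mem u hu]
  · rw [hD u hu, hD _ (hf.map_mem u hu), hf.apply_apply u hu]
  · rw [hD u hu]; exact hf.apply_ne u hu
  · rw [hD u hu]; exact hf.adj u hu

lemma exists_extend (hP : IsPairing G P g) (T : Finset V) :
    ∃ D f, IsPairing G D f ∧ P ⊆ D ∧ (∀ t ∈ T, t ∈ D ∨ ∀ c, G.Adj t c → c ∈ D) ∧
      D.card ≤ P.card + 2 * T.card := by
  induction T using Finset.induction_on with
  | empty => exact ⟨P, g, hP, subset_rfl, by simp, by simp⟩
  | insert q T hq ih =>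
    obtain ⟨D, f, hf, hPD, hT, hcard⟩ := ih
    simp only [card_insert_of_notMem hq, forall_mem_insert]
    by_cases hN : q ∉ D ∧ ∃ c, G.Adj q c ∧ c ∉ D
    · obtain ⟨hqD, c, hqc, hcD⟩ := hN
      have hsub : D ⊆ insert q (insert c D) := (subset_insert c D).trans (subset_insert q _)
      refine ⟨_, _, hf.insert_insert hqc hqD hcD, hPD.trans hsub,
        ⟨.inl (mem_insert_self q _), fun t ht => (hT t ht).imp (@hsub t) ?_⟩, ?_⟩
      · exact fun h c htc => hsub (h c htc)
      · grw [card_insert_le, card_insert_le]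
        omega
    · refine ⟨D, f, hf, hPD, ⟨?_, hT⟩, by omega⟩
      push Not at hN
      by_cases hqD : q ∈ D
      exacts [.inl hqD, .inr (hN hqD)]

lemma exists_pairedDom_of_dominating_union (hiso : ∀ v, ∃ u, G.Adj u v) (hP : IsPairing G P g)
    {T : Finset V} (hdom : Dominating G (P ∪ T)) :
    ∃ D, PairedDom G D ∧ D.card ≤ P.card + 2 * T.card := by
  obtain ⟨D, f, hf, hPD, hT, hcard⟩ := hP.exists_extend T
  refine ⟨D, pairedDom_iff.2 ⟨fun v => ?_, f, hf⟩, hcard⟩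
  obtain ⟨s, hs, hsv⟩ := hdom v
  rcases mem_union.1 hs with hsP | hsT
  · exact ⟨s, hPD hsP, hsv⟩
  rcases hT s hsT with hsD | hN
  · exact ⟨s, hsD, hsv⟩
  rcases hsv with rfl | hsv
  · obtain ⟨u, hu⟩ := hiso s
    exact ⟨u, hN u hu.symm, .inr hu⟩
  · exact ⟨v, hN v hsv, .inl rfl⟩

end IsPairing

namespace GP4

variable {α : Type*} {H : SimpleGraph α} {a b : α} {i j : Fin 4} {u : α ⊕ α × Fin 4}

@[simp] lemma adj_inl_inl : (GP4 H).Adj (.inl a) (.inl b) ↔ H.Adj a b := by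
  simpa [GP4, H.adj_comm b a] using fun h : H.Adj a b => h.ne

@[simp] lemma adj_inl_inr_s7 : (GP4 H).Adj (.inl a) (.inr (b, j)) ↔ b = a ∧ j = 0 := by
  simp [GP4]

@[simp] lemma adj_inr_inl : (GP4 H).Adj (.inr (b, j)) (.inl a) ↔ b = a ∧ j = 0 := by
  rw [adj_comm, adj_inl_inr_s7]

@[simp] lemma adj_inr_inr_s7 :
    (GP4 H).Adj (.inr (a, i)) (.inr (b, j)) ↔ b = a ∧ ((j : ℕ) = i + 1 ∨ (i : ℕ) = j + 1) := by
  simp only [GP4, fromRel_adj]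
  grind [Fin.ext_iff]

lemma adj_inl_iff : (GP4 H).Adj (.inl a) u ↔ u = .inr (a, 0) ∨ ∃ b, u = .inl b ∧ H.Adj a b := by
  rcases u with b | ⟨b, j⟩ <;> simp [eq_comm]

lemma adj_inr_zero_iff : (GP4 H).Adj (.inr (a, 0)) u ↔ u = .inl a ∨ u = .inr (a, 1) := by
  rcases u with b | ⟨b, j⟩ <;> grind [adj_inr_inl, adj_inr_inr_s7, Fin.ext_iff]

lemma adj_inr_two_iff : (GP4 H).Adj (.inr (a, 2)) u ↔ u = .inr (a, 1) ∨ u = .inr (a, 3) := by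
  rcases u with b | ⟨b, j⟩ <;> grind [adj_inr_inl, adj_inr_inr_s7, Fin.ext_iff]

lemma adj_inr_three_iff : (GP4 H).Adj (.inr (a, 3)) u ↔ u = .inr (a, 2) := by
  rcases u with b | ⟨b, j⟩ <;> grind [adj_inr_inl, adj_inr_inr_s7, Fin.ext_iff]

variable {D : Finset (α ⊕ α × Fin 4)} {f : α ⊕ α × Fin 4 → α ⊕ α × Fin 4}

lemma inr_two_mem (hdom : Dominating (GP4 H) D) (hf : IsPairing (GP4 H) D f) (a : α) :
    .inr (a, 2) ∈ D := by
  obtain ⟨u, hu, rfl | hu3⟩ := hdom (.inr (a, 3))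
  · have h := hf.adj _ hu
    rw [adj_inr_three_iff] at h
    exact h ▸ hf.map_mem _ hu
  · rw [adj_comm, adj_inr_three_iff] at hu3
    exact hu3 ▸ hu

lemma inr_mem_of_not_dominated (hdom : Dominating (GP4 H) D) (hf : IsPairing (GP4 H) D f)
    (ha : ∀ b, b = a ∨ H.Adj b a → .inl b ∉ D) (j : Fin 4) : .inr (a, j) ∈ D := by
  have hw : .inr (a, 0) ∈ D := by
    obtain ⟨u, hu, rfl | hua⟩ := hdom (.inl a)
    · exact absurd hu (ha a (.inl rfl))
    rw [adj_comm, adj_inl_iff] at hua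
    obtain rfl | ⟨b, rfl, hab⟩ := hua
    exacts [hu, absurd hu (ha b (.inr hab.symm))]
  have hfw : f (.inr (a, 0)) = .inr (a, 1) :=
    (adj_inr_zero_iff.1 (hf.adj _ hw)).resolve_left fun h =>
      ha a (.inl rfl) (h ▸ hf.map_mem _ hw)
  have hy := inr_two_mem hdom hf a
  obtain hfy | hfy := adj_inr_two_iff.1 (hf.adj _ hy)
  · -- `x_a` cannot be the partner of both `w_a` and `y_a`
    have : f (.inr (a, 1)) = .inr (a, 2) := by rw [← hfy, hf.apply_apply _ hy]
    rw [← hfw, hf.apply_apply _ hw] at this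
    simp at this
  fin_cases j
  exacts [hw, hfw ▸ hf.map_mem _ hw, hy, hfy ▸ hf.map_mem _ hy]

def pairedHubs (D : Finset (α ⊕ α × Fin 4)) (f : α ⊕ α × Fin 4 → α ⊕ α × Fin 4) : Finset α :=
  D.toLeft.filter fun a => (f (.inl a)).isLeft

def hubPartner (f : α ⊕ α × Fin 4 → α ⊕ α × Fin 4) (a : α) : α :=
  (f (.inl a)).elim id fun _ => a

open Classical in
noncomputable def heavy [Fintype α] (H : SimpleGraph α) (D : Finset (α ⊕ α × Fin 4))
    (f : α ⊕ α × Fin 4 → α ⊕ α × Fin 4) : Finset α :=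
  univ.filter fun a => (.inl a ∈ D ∧ ¬(f (.inl a)).isLeft) ∨ ∀ b, b = a ∨ H.Adj b a → .inl b ∉ D

lemma mem_pairedHubs : a ∈ pairedHubs D f ↔ .inl a ∈ D ∧ (f (.inl a)).isLeft := by
  simp [pairedHubs]

lemma mem_heavy [Fintype α] : a ∈ heavy H D f ↔
    (.inl a ∈ D ∧ ¬(f (.inl a)).isLeft) ∨ ∀ b, b = a ∨ H.Adj b a → .inl b ∉ D := by
  classical
  simp only [heavy, mem_filter, mem_univ, true_and]

lemma apply_inl_of_mem_pairedHubs (ha : a ∈ pairedHubs D f) :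
    f (.inl a) = .inl (hubPartner f a) := by
  obtain ⟨b, hb⟩ := Sum.isLeft_iff.1 (mem_pairedHubs.1 ha).2
  simp [hubPartner, hb]

lemma isPairing_pairedHubs (hf : IsPairing (GP4 H) D f) :
    IsPairing H (pairedHubs D f) (hubPartner f) := by
  have hD : ∀ a ∈ pairedHubs D f, .inl a ∈ D := fun a ha => (mem_pairedHubs.1 ha).1
  have hback : ∀ a ∈ pairedHubs D f, f (.inl (hubPartner f a)) = .inl a := fun a ha => by
    rw [← apply_inl_of_mem_pairedHubs ha, hf.apply_apply _ (hD a ha)]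
  have hmem : ∀ a ∈ pairedHubs D f, hubPartner f a ∈ pairedHubs D f := fun a ha => by
    refine mem_pairedHubs.2 ⟨?_, by simp [hback a ha]⟩
    exact apply_inl_of_mem_pairedHubs ha ▸ hf.map_mem _ (hD a ha)
  refine ⟨hmem, fun a ha => ?_, fun a ha h => ?_, fun a ha => ?_⟩
  · simpa [hback a ha] using (apply_inl_of_mem_pairedHubs (hmem a ha)).symm
  · exact hf.apply_ne _ (hD a ha) (by rw [apply_inl_of_mem_pairedHubs ha, h])
  · simpa [apply_inl_of_mem_pairedHubs ha] using hf.adj _ (hD a ha)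

variable [Fintype α] [DecidableEq α]

lemma dominating_pairedHubs_union_heavy : Dominating H (pairedHubs D f ∪ heavy H D f) := by
  intro v
  by_cases hv : ∃ b, (b = v ∨ H.Adj b v) ∧ .inl b ∈ D
  · obtain ⟨b, hbv, hb⟩ := hv
    refine ⟨b, ?_, hbv⟩
    by_cases hl : (f (.inl b)).isLeft
    · exact mem_union_left _ (mem_pairedHubs.2 ⟨hb, hl⟩)
    · exact mem_union_right _ (mem_heavy.2 (.inl ⟨hb, hl⟩))
  · push Not at hv
    exact ⟨v, mem_union_right _ (mem_heavy.2 (.inr hv)), .inl rfl⟩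

def gadgetCard (D : Finset (α ⊕ α × Fin 4)) (a : α) : ℕ :=
  (if .inl a ∈ D then 1 else 0) + ∑ j, if .inr (a, j) ∈ D then 1 else 0

lemma card_eq_sum_gadgetCard (D : Finset (α ⊕ α × Fin 4)) : D.card = ∑ a, gadgetCard D a := by
  rw [card_eq_sum_ite (subset_univ D), Fintype.sum_sum_type, Fintype.sum_prod_type,
    ← sum_add_distrib]
  rfl

lemma two_add_le_gadgetCard (hdom : Dominating (GP4 H) D) (hf : IsPairing (GP4 H) D f) (a : α) :
    2 + (if a ∈ pairedHubs D f then 1 else 0) + (if a ∈ heavy H D f then 2 else 0) ≤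
      gadgetCard D a := by
  have hy := inr_two_mem hdom hf a
  have hxz : 1 ≤ (if .inr (a, 1) ∈ D then 1 else 0) + (if .inr (a, 3) ∈ D then 1 else 0) := by
    rcases adj_inr_two_iff.1 (hf.adj _ hy) with h | h <;> simp [← h, hf.map_mem _ hy]
  rw [gadgetCard, Fin.sum_univ_four]
  by_cases hT : a ∈ heavy H D f
  · rcases mem_heavy.1 hT with ⟨ha, hl⟩ | hund
    · have hw : .inr (a, 0) ∈ D := by
        obtain hfa | ⟨b, hfa, -⟩ := adj_inl_iff.1 (hf.adj _ ha)
        · exact hfa ▸ hf.map_mem _ ha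
        · simp [hfa] at hl
      rw [if_pos hT, if_neg (hl ∘ And.right ∘ mem_pairedHubs.1), if_pos ha, if_pos hw, if_pos hy]
      omega
    · simp [hT, mem_pairedHubs, inr_mem_of_not_dominated hdom hf hund, hund a (.inl rfl)]
  · have hP : (if a ∈ pairedHubs D f then 1 else 0) ≤ (if .inl a ∈ D then 1 else 0) := by
      split_ifs <;> simp_all [mem_pairedHubs]
    rw [if_neg hT, if_pos hy]
    omega

lemma card_pairedHubs_add_two_mul_card_heavy_add_le (hdom : Dominating (GP4 H) D)
    (hf : IsPairing (GP4 H) D f) :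
    (pairedHubs D f).card + 2 * (heavy H D f).card + 2 * Fintype.card α ≤ D.card :=
  calc _ = ∑ a, (2 + (if a ∈ pairedHubs D f then 1 else 0) + if a ∈ heavy H D f then 2 else 0) := by
        simp only [sum_add_distrib, sum_const, card_univ, smul_eq_mul, sum_ite_mem, univ_inter]
        ring
    _ ≤ ∑ a, gadgetCard D a := sum_le_sum fun a _ => two_add_le_gadgetCard hdom hf a
    _ = D.card := (card_eq_sum_gadgetCard D).symm

end GP4

theorem gp4_pairedDom_reverse_general {α : Type*} [Fintype α]
    (H : SimpleGraph α) (hiso : ∀ v : α, ∃ u : α, H.Adj u v)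
    (k : ℕ)
    (h : ∃ D' : Finset (α ⊕ α × Fin 4),
      PairedDom (GP4 H) D' ∧ D'.card ≤ 2 * Fintype.card α + k) :
    ∃ D : Finset α, PairedDom H D ∧ D.card ≤ k := by
  classical
  obtain ⟨D', hD', hcard⟩ := h
  obtain ⟨hdom, f, hf⟩ := pairedDom_iff.1 hD'
  obtain ⟨D, hD, hDcard⟩ := (GP4.isPairing_pairedHubs hf).exists_pairedDom_of_dominating_union
    hiso GP4.dominating_pairedHubs_union_heavy
  have := GP4.card_pairedHubs_add_two_mul_card_heavy_add_le hdom hf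
  exact ⟨D, hD, by omega⟩

/-- If the GP4-graph of `H` (connected, no isolated vertices, `n` vertices)
has a paired dominating set of size at most `2n + k` with `k ≤ n`, then `H` has a paired
dominating set of size at most `k`. -/
theorem gp4_pairedDom_reverse {α : Type*} [Fintype α] [DecidableEq α]
    (H : SimpleGraph α) (hH : H.Connected) (hiso : ∀ v : α, ∃ u : α, H.Adj u v)
    (k : ℕ) (hk : k ≤ Fintype.card α)
    (h : ∃ D' : Finset (α ⊕ α × Fin 4),
      PairedDom (GP4 H) D' ∧ D'.card ≤ 2 * Fintype.card α + k) :
    ∃ D : Finset α, PairedDom H D ∧ D.card ≤ k :=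
  gp4_pairedDom_reverse_general H hiso k h
end

section
/- If G is a GP5-graph obtained from a connected graph H with n vertices, then the paired domination number of G equals (2/3)|V(G)|, i.e. γ_{pr}(G) = 4n. -/
open SimpleGraph Finset

/-- The GP5-graph obtained from `H` by attaching, for each vertex `a`, a disjoint path
`a_a – b_a – c_a – d_a – e_a` (the vertices `Sum.inr (a, 0), …, Sum.inr (a, 4)`) and
joining `a` to the central vertex `c_a = Sum.inr (a, 2)`. -/
def GP5 {α : Type*} (H : SimpleGraph α) : SimpleGraph (α ⊕ α × Fin 5) :=
  SimpleGraph.fromRel (fun u v =>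
    (∃ a b, u = Sum.inl a ∧ v = Sum.inl b ∧ H.Adj a b) ∨
    (∃ a, u = Sum.inl a ∧ v = Sum.inr (a, 2)) ∨
    (∃ (a : α) (j k : Fin 5), u = Sum.inr (a, j) ∧ v = Sum.inr (a, k) ∧ (k : ℕ) = (j : ℕ) + 1))

/-!
Each leaf `a_i`, `e_i` of a pendant path forces its support vertex `b_i`, `d_i` into every
paired dominating set, and the partners of `b_i` and `d_i` are two further, distinct vertices of
the same path; so every pendant path carries at least four vertices of the set. Conversely, the
vertices `b_i, c_i, d_i, e_i`, paired as `b_i c_i` and `d_i e_i`, form a paired dominating set of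
size `4n`.
-/

lemma PairedDom.mem_of_forall_adj_eq {V : Type*} {G : SimpleGraph V} {D : Finset V}
    (hD : PairedDom G D) {ℓ u : V} (hℓ : ∀ w, G.Adj ℓ w → w = u) : u ∈ D := by
  obtain ⟨hdom, f, hfD, -, -, hadj⟩ := hD
  obtain ⟨w, hw, rfl | hwℓ⟩ := hdom ℓ
  · exact hℓ _ (hadj _ hw) ▸ hfD _ hw
  · exact hℓ _ hwℓ.symm ▸ hw

lemma pairedDomNum_eq {V : Type*} [Fintype V] {G : SimpleGraph V} {k : ℕ}
    (hex : ∃ D, PairedDom G D ∧ D.card = k) (hle : ∀ D, PairedDom G D → k ≤ D.card) :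
    pairedDomNum V G = k :=
  le_antisymm (Nat.sInf_le hex) (le_csInf ⟨k, hex⟩ fun _ ⟨D, hD, hk⟩ => hk ▸ hle D hD)

section GP5

variable {α : Type*} {H : SimpleGraph α} {a b : α} {j k : Fin 5}

@[simp] lemma gp5_adj_inl_inr : (GP5 H).Adj (.inl a) (.inr (b, k)) ↔ a = b ∧ k = 2 := by
  simp [GP5]
  grind

@[simp] lemma gp5_adj_inr_inl : (GP5 H).Adj (.inr (a, j)) (.inl b) ↔ a = b ∧ j = 2 := by
  rw [adj_comm, gp5_adj_inl_inr, eq_comm]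

@[simp] lemma gp5_adj_inr_inr :
    (GP5 H).Adj (.inr (a, j)) (.inr (b, k)) ↔ a = b ∧ (pathGraph 5).Adj j k := by
  simp only [GP5, fromRel_adj, pathGraph_adj]
  grind

def gp5Base : α ⊕ α × Fin 5 → α := Sum.elim id Prod.fst

lemma gp5Base_eq_of_adj_inr {x : α ⊕ α × Fin 5} (h : (GP5 H).Adj (.inr (a, j)) x) :
    gp5Base x = a := by
  rcases x with b | ⟨b, k⟩ <;> simp_all [gp5Base]

lemma gp5_eq_of_adj_inr_zero {x : α ⊕ α × Fin 5} (h : (GP5 H).Adj (.inr (a, 0)) x) :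
    x = .inr (a, 1) := by
  rcases x with b | ⟨b, k⟩
  · simp at h
  · obtain ⟨rfl, hk⟩ := gp5_adj_inr_inr.mp h
    fin_cases k <;> simp_all [pathGraph_adj]

lemma gp5_eq_of_adj_inr_four {x : α ⊕ α × Fin 5} (h : (GP5 H).Adj (.inr (a, 4)) x) :
    x = .inr (a, 3) := by
  rcases x with b | ⟨b, k⟩
  · simp at h
  · obtain ⟨rfl, hk⟩ := gp5_adj_inr_inr.mp h
    fin_cases k <;> simp_all [pathGraph_adj]

lemma PairedDom.four_le_card_filter_gp5Base [DecidableEq α] {D : Finset (α ⊕ α × Fin 5)}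
    (hD : PairedDom (GP5 H) D) (a : α) : 4 ≤ #{x ∈ D | gp5Base x = a} := by
  set b : α ⊕ α × Fin 5 := .inr (a, 1)
  set d : α ⊕ α × Fin 5 := .inr (a, 3)
  have hb : b ∈ D := hD.mem_of_forall_adj_eq fun _ => gp5_eq_of_adj_inr_zero
  have hd : d ∈ D := hD.mem_of_forall_adj_eq fun _ => gp5_eq_of_adj_inr_four
  obtain ⟨-, f, hfD, hff, hfne, hadj⟩ := hD
  have hbd : ¬(GP5 H).Adj b d := by simp [b, d, pathGraph_adj]
  have hsub : {b, d, f b, f d} ⊆ {x ∈ D | gp5Base x = a} := by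
    simp only [insert_subset_iff, singleton_subset_iff, mem_filter]
    exact ⟨⟨hb, rfl⟩, ⟨hd, rfl⟩, ⟨hfD _ hb, gp5Base_eq_of_adj_inr (hadj _ hb)⟩,
      ⟨hfD _ hd, gp5Base_eq_of_adj_inr (hadj _ hd)⟩⟩
  have hcard : #{b, d, f b, f d} = 4 := by
    refine card_eq_four.mpr ⟨_, _, _, _, by simp [b, d], (hfne _ hb).symm, ?_, ?_,
      (hfne _ hd).symm, ?_, rfl⟩
    · exact fun h => hbd (h ▸ (hadj _ hd).symm)
    · exact fun h => hbd (h ▸ hadj _ hb)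
    · intro h
      have := congrArg f h
      rw [hff _ hb, hff _ hd] at this
      simp [b, d] at this
  exact hcard ▸ card_le_card hsub

/-- Pairs `b_a` with `c_a` and `d_a` with `e_a`. -/
def gp5Partner : α ⊕ α × Fin 5 → α ⊕ α × Fin 5 := Sum.map id (Prod.map id ![0, 2, 1, 4, 3])

variable [Fintype α]

variable (α) in
def gp5PairedDomSet : Finset (α ⊕ α × Fin 5) := (univ ×ˢ {0}ᶜ).map .inr

lemma mem_gp5PairedDomSet {x : α ⊕ α × Fin 5} :
    x ∈ gp5PairedDomSet α ↔ ∃ a, ∃ j ≠ 0, x = .inr (a, j) := by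
  simp [gp5PairedDomSet, eq_comm]

lemma card_gp5PairedDomSet : #(gp5PairedDomSet α) = 4 * Fintype.card α := by
  simp [gp5PairedDomSet, card_compl, mul_comm]

lemma pairedDom_gp5PairedDomSet : PairedDom (GP5 H) (gp5PairedDomSet α) := by
  refine ⟨?_, gp5Partner, ?_, ?_, ?_, ?_⟩
  · rintro (a | ⟨a, j⟩)
    · exact ⟨.inr (a, 2), mem_gp5PairedDomSet.mpr ⟨a, 2, by decide, rfl⟩, by simp⟩
    · by_cases hj : j = 0
      · exact ⟨.inr (a, 1), mem_gp5PairedDomSet.mpr ⟨a, 1, by decide, rfl⟩, by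
          simp [hj, pathGraph_adj]⟩
      · exact ⟨_, mem_gp5PairedDomSet.mpr ⟨a, j, hj, rfl⟩, .inl rfl⟩
  all_goals
    simp only [mem_gp5PairedDomSet]
    rintro _ ⟨a, j, hj, rfl⟩
    fin_cases j <;> simp_all [gp5Partner, pathGraph_adj]

end GP5

theorem gp5_pairedDomNum_general {α : Type*} [Fintype α]
    (H : SimpleGraph α) :
    pairedDomNum (α ⊕ α × Fin 5) (GP5 H) = 4 * Fintype.card α := by
  classical
  refine pairedDomNum_eq ⟨_, pairedDom_gp5PairedDomSet, card_gp5PairedDomSet⟩ fun D hD => ?_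
  simpa using mul_card_image_le_card_of_maps_to (t := univ) (fun x _ => mem_univ (gp5Base x)) 4
    fun a _ => hD.four_le_card_filter_gp5Base a

/-- If `G` is the GP5-graph of a connected graph `H` with `n` vertices,
then `γ_{pr}(G) = 4n = (2/3)|V(G)|`. -/
theorem gp5_pairedDomNum {α : Type*} [Fintype α] [DecidableEq α]
    (H : SimpleGraph α) (hH : H.Connected) :
    pairedDomNum (α ⊕ α × Fin 5) (GP5 H) = 4 * Fintype.card α :=
  gp5_pairedDomNum_general H
end

section
/- Let G be a GP5-graph constructed from a connected graph H with n vertices. The set S = {a_i, b_i, c_i, d_i : 1 ≤ i ≤ n} is a paired dominating set of G; hence γ_{pr}(G) ≤ 4n. -/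
open SimpleGraph Finset

theorem pairedDomNum_le_card {V : Type*} [Fintype V] {G : SimpleGraph V} {D : Finset V}
    (hD : PairedDom G D) : pairedDomNum V G ≤ D.card :=
  Nat.sInf_le ⟨D, hD, rfl⟩

namespace GP5

variable {α : Type*}

theorem adj_inr_inr_of_succ (H : SimpleGraph α) (a : α) {j k : Fin 5}
    (h : (k : ℕ) = (j : ℕ) + 1) : (GP5 H).Adj (Sum.inr (a, j)) (Sum.inr (a, k)) := by
  rw [GP5, fromRel_adj]
  refine ⟨fun he => ?_, Or.inl (Or.inr (Or.inr ⟨a, j, k, rfl, rfl, h⟩))⟩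
  simp only [Sum.inr.injEq, Prod.mk.injEq, true_and] at he
  omega

theorem adj_inr_two_inl (H : SimpleGraph α) (a : α) :
    (GP5 H).Adj (Sum.inr (a, 2)) (Sum.inl a) := by
  rw [GP5, fromRel_adj]
  exact ⟨by simp, Or.inr (Or.inr (Or.inl ⟨a, rfl, rfl⟩))⟩

/-- Spelled exactly as the set in `gp5_pairedDomNum_le`, so that it unfolds to it. -/
def abcd (α : Type*) [Fintype α] [DecidableEq α] : Finset (α ⊕ α × Fin 5) :=
  (Finset.univ.image fun a : α => (Sum.inr (a, 0) : α ⊕ α × Fin 5)) ∪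
    (Finset.univ.image fun a : α => (Sum.inr (a, 1) : α ⊕ α × Fin 5)) ∪
    (Finset.univ.image fun a : α => (Sum.inr (a, 2) : α ⊕ α × Fin 5)) ∪
    (Finset.univ.image fun a : α => (Sum.inr (a, 3) : α ⊕ α × Fin 5))

variable [Fintype α] [DecidableEq α]

theorem inl_notMem_abcd (a : α) : Sum.inl a ∉ abcd α := by
  simp [abcd]

theorem inr_mem_abcd_iff (a : α) (j : Fin 5) : Sum.inr (a, j) ∈ abcd α ↔ j ≠ 4 := by
  fin_cases j <;> simp [abcd]

theorem abcd_eq_image : abcd α = (univ ×ˢ ({0, 1, 2, 3} : Finset (Fin 5))).image Sum.inr := by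
  ext (a | ⟨a, j⟩)
  · simp [inl_notMem_abcd]
  · rw [inr_mem_abcd_iff]
    fin_cases j <;> simp

theorem card_abcd : (abcd α).card = 4 * Fintype.card α := by
  rw [abcd_eq_image, card_image_of_injective _ Sum.inr_injective, card_product, card_univ,
    mul_comm]
  rfl

theorem dominating_abcd (H : SimpleGraph α) : Dominating (GP5 H) (abcd α) := by
  rintro (a | ⟨a, j⟩)
  · exact ⟨Sum.inr (a, 2), (inr_mem_abcd_iff a 2).2 (by decide), Or.inr (adj_inr_two_inl H a)⟩
  · by_cases hj : j = 4
    · subst hj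
      exact ⟨Sum.inr (a, 3), (inr_mem_abcd_iff a 3).2 (by decide),
        Or.inr (adj_inr_inr_of_succ H a rfl)⟩
    · exact ⟨Sum.inr (a, j), (inr_mem_abcd_iff a j).2 hj, Or.inl rfl⟩

-- The perfect matching `a_i b_i`, `c_i d_i` of the induced subgraph, on path indices.
def mateIdx : Fin 5 → Fin 5 := ![1, 0, 3, 2, 4]

theorem mateIdx_mateIdx (j : Fin 5) : mateIdx (mateIdx j) = j := by
  revert j; decide

theorem mateIdx_ne_four {j : Fin 5} (hj : j ≠ 4) : mateIdx j ≠ 4 := by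
  revert j; decide

theorem mateIdx_ne_self {j : Fin 5} (hj : j ≠ 4) : mateIdx j ≠ j := by
  revert j; decide

theorem mateIdx_succ_or_pred {j : Fin 5} (hj : j ≠ 4) :
    (mateIdx j : ℕ) = j + 1 ∨ (j : ℕ) = mateIdx j + 1 := by
  revert j; decide

theorem exists_eq_inr_of_mem_abcd {u : α ⊕ α × Fin 5} (hu : u ∈ abcd α) :
    ∃ a j, j ≠ 4 ∧ u = Sum.inr (a, j) := by
  rcases u with a | ⟨a, j⟩
  · exact absurd hu (inl_notMem_abcd a)
  · exact ⟨a, j, (inr_mem_abcd_iff a j).1 hu, rfl⟩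

theorem pairedDom_abcd (H : SimpleGraph α) : PairedDom (GP5 H) (abcd α) := by
  refine ⟨dominating_abcd H, Sum.map id (Prod.map id mateIdx), ?_, ?_, ?_, ?_⟩ <;>
    intro u hu <;> obtain ⟨a, j, hj, rfl⟩ := exists_eq_inr_of_mem_abcd hu
  · exact (inr_mem_abcd_iff a _).2 (mateIdx_ne_four hj)
  · simp [mateIdx_mateIdx]
  · simpa using mateIdx_ne_self hj
  · rcases mateIdx_succ_or_pred hj with h | h
    · exact adj_inr_inr_of_succ H a h
    · exact (adj_inr_inr_of_succ H a h).symm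

end GP5

theorem gp5_pairedDomNum_le_general {α : Type*} [Fintype α] [DecidableEq α]
    (H : SimpleGraph α) :
    PairedDom (GP5 H)
      ((Finset.univ.image fun a : α => (Sum.inr (a, 0) : α ⊕ α × Fin 5)) ∪
        (Finset.univ.image fun a : α => (Sum.inr (a, 1) : α ⊕ α × Fin 5)) ∪
        (Finset.univ.image fun a : α => (Sum.inr (a, 2) : α ⊕ α × Fin 5)) ∪
        (Finset.univ.image fun a : α => (Sum.inr (a, 3) : α ⊕ α × Fin 5))) ∧
    pairedDomNum (α ⊕ α × Fin 5) (GP5 H) ≤ 4 * Fintype.card α := by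
  have hS := GP5.pairedDom_abcd H
  exact ⟨hS, (pairedDomNum_le_card hS).trans_eq GP5.card_abcd⟩

/-- The set `S = {a_i, b_i, c_i, d_i}` is a paired dominating set of the
GP5-graph; hence `γ_{pr}(G) ≤ 4n`. -/
theorem gp5_pairedDomNum_le {α : Type*} [Fintype α] [DecidableEq α]
    (H : SimpleGraph α) (hH : H.Connected) :
    PairedDom (GP5 H)
      ((Finset.univ.image fun a : α => (Sum.inr (a, 0) : α ⊕ α × Fin 5)) ∪
        (Finset.univ.image fun a : α => (Sum.inr (a, 1) : α ⊕ α × Fin 5)) ∪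
        (Finset.univ.image fun a : α => (Sum.inr (a, 2) : α ⊕ α × Fin 5)) ∪
        (Finset.univ.image fun a : α => (Sum.inr (a, 3) : α ⊕ α × Fin 5))) ∧
    pairedDomNum (α ⊕ α × Fin 5) (GP5 H) ≤ 4 * Fintype.card α :=
  gp5_pairedDomNum_le_general H
end

section
/- Let G be a GP5-graph constructed from a connected graph H with n vertices. Every paired dominating set of G contains at least four vertices from {a_i, b_i, c_i, d_i, e_i} for each i; hence γ_{pr}(G) ≥ 4n. -/
open SimpleGraph Finset

/-
Let `x₀ – x₁ – x₂ – x₃ – x₄` be one of the attached paths, so that `x₀, x₄` are leaves and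
the only neighbours of `x₁` and `x₃` lie on the path. Dominating the leaves forces their
supports `x₁, x₃` into every paired dominating set `D`, and their partners in the matching
are path vertices which are distinct (the matching is an involution) and differ from
`x₁, x₃`. So `D` meets every path in at least four vertices, and the paths are disjoint.
-/

namespace PairedDom

variable {V : Type*} {G : SimpleGraph V} {D : Finset V}

theorem mem_of_forall_adj_eq_s10 (hD : PairedDom G D) {x y : V} (hx : ∀ u, G.Adj u x → u = y) :
    y ∈ D := by
  obtain ⟨hdom, f, hfD, -, -, hfadj⟩ := hD
  obtain ⟨u, huD, rfl | hux⟩ := hdom x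
  · exact hx _ (hfadj u huD).symm ▸ hfD u huD
  · exact hx u hux ▸ huD

theorem four_le_card_filter_of_pendant_path (hD : PairedDom G D) {p : Fin 5 → V}
    (hp : Function.Injective p) (h0 : ∀ u, G.Adj u (p 0) → u = p 1)
    (h1 : ∀ u, G.Adj u (p 1) → u = p 0 ∨ u = p 2)
    (h3 : ∀ u, G.Adj u (p 3) → u = p 2 ∨ u = p 4)
    (h4 : ∀ u, G.Adj u (p 4) → u = p 3)
    (P : V → Prop) [DecidablePred P] (hP : ∀ k, P (p k)) :
    4 ≤ #(D.filter P) := by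
  have hp1 : p 1 ∈ D := hD.mem_of_forall_adj_eq_s10 h0
  have hp3 : p 3 ∈ D := hD.mem_of_forall_adj_eq_s10 h4
  obtain ⟨-, f, hfD, hff, hfne, hfadj⟩ := hD
  have hf1 : f (p 1) = p 0 ∨ f (p 1) = p 2 := h1 _ (hfadj _ hp1).symm
  have hf3 : f (p 3) = p 2 ∨ f (p 3) = p 4 := h3 _ (hfadj _ hp3).symm
  have hf13 : f (p 1) ≠ f (p 3) := fun h =>
    hp.ne (by decide : (1 : Fin 5) ≠ 3) (by rw [← hff _ hp1, h, hff _ hp3])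
  have h1f3 : p 1 ≠ f (p 3) := by rcases hf3 with h | h <;> rw [h] <;> exact hp.ne (by decide)
  have h3f1 : p 3 ≠ f (p 1) := by rcases hf1 with h | h <;> rw [h] <;> exact hp.ne (by decide)
  have hmem : ∀ v ∈ D, v ∈ Set.range p → v ∈ D.filter P := by
    rintro v hv ⟨k, rfl⟩
    exact mem_filter.2 ⟨hv, hP k⟩
  classical
  refine le_card_iff_exists_subset_card.2 ⟨{p 1, p 3, f (p 1), f (p 3)}, ?_, card_eq_four.2
    ⟨_, _, _, _, hp.ne (by decide), (hfne _ hp1).symm, h1f3, h3f1, (hfne _ hp3).symm, hf13, rfl⟩⟩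
  simp only [insert_subset_iff, singleton_subset_iff]
  exact ⟨hmem _ hp1 ⟨1, rfl⟩, hmem _ hp3 ⟨3, rfl⟩,
    hmem _ (hfD _ hp1) (hf1.elim (fun h => ⟨0, h.symm⟩) fun h => ⟨2, h.symm⟩),
    hmem _ (hfD _ hp3) (hf3.elim (fun h => ⟨2, h.symm⟩) fun h => ⟨4, h.symm⟩)⟩

end PairedDom

theorem Finset.mul_card_le_card_of_le_card_filter {α V : Type*} [Fintype α] (D : Finset V)
    (P : α → V → Prop) [∀ a, DecidablePred (P a)]
    (hdisj : ∀ v a b, P a v → P b v → a = b) {m : ℕ} (hm : ∀ a, m ≤ #(D.filter (P a))) :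
    m * Fintype.card α ≤ #D := by
  classical
  calc m * Fintype.card α = ∑ _a : α, m := by simp [mul_comm]
    _ ≤ ∑ a : α, #(D.filter (P a)) := sum_le_sum fun a _ => hm a
    _ = #(univ.biUnion fun a => D.filter (P a)) := by
      refine (card_biUnion fun a _ b _ hab => disjoint_left.2 ?_).symm
      intro v hva hvb
      exact hab (hdisj v a b (mem_filter.1 hva).2 (mem_filter.1 hvb).2)
    _ ≤ #D := card_le_card (biUnion_subset.2 fun a _ => filter_subset _ _)

theorem gp5_adj_inr_of_ne_two {α : Type*} {H : SimpleGraph α} {a : α} {k : Fin 5}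
    {u : α ⊕ α × Fin 5} (hk : k ≠ 2) (hu : (GP5 H).Adj u (Sum.inr (a, k))) :
    ∃ j : Fin 5, u = Sum.inr (a, j) ∧ ((j : ℕ) = k + 1 ∨ (k : ℕ) = j + 1) := by
  obtain ⟨-, (⟨b, c, -, h, -⟩ | ⟨b, -, h⟩ | ⟨b, j, l, rfl, h, hjl⟩) |
    (⟨b, c, h, -, -⟩ | ⟨b, h, -⟩ | ⟨b, j, l, h, rfl, hjl⟩)⟩ := hu
  all_goals simp only [reduceCtorEq, Sum.inr.injEq, Prod.mk.injEq] at h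
  · exact absurd h.2 hk
  · obtain ⟨rfl, rfl⟩ := h
    exact ⟨j, rfl, Or.inr hjl⟩
  · obtain ⟨rfl, rfl⟩ := h
    exact ⟨l, rfl, Or.inl hjl⟩

theorem gp5_four_le_card_filter {α : Type*} {H : SimpleGraph α} {D : Finset (α ⊕ α × Fin 5)}
    (hD : PairedDom (GP5 H) D) (a : α)
    [DecidablePred fun v : α ⊕ α × Fin 5 => ∃ k : Fin 5, v = Sum.inr (a, k)] :
    4 ≤ #(D.filter fun v => ∃ k : Fin 5, v = Sum.inr (a, k)) := by
  refine hD.four_le_card_filter_of_pendant_path (p := fun k => Sum.inr (a, k))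
    (fun i j h => by simpa using h) ?_ ?_ ?_ ?_ _ fun k => ⟨k, rfl⟩ <;>
  · intro u hu
    obtain ⟨j, rfl, hj⟩ := gp5_adj_inr_of_ne_two (by decide) hu
    simp only [Sum.inr.injEq, Prod.mk.injEq, true_and, Fin.ext_iff]
    omega

open scoped Classical in
theorem gp5_pairedDom_lower_general {α : Type*} [Fintype α] [DecidableEq α]
    (H : SimpleGraph α)
    (D : Finset (α ⊕ α × Fin 5)) (hD : PairedDom (GP5 H) D) :
    (∀ a : α, 4 ≤ (D.filter fun v => ∃ k : Fin 5, v = Sum.inr (a, k)).card) ∧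
    4 * Fintype.card α ≤ D.card ∧
    4 * Fintype.card α ≤ pairedDomNum (α ⊕ α × Fin 5) (GP5 H) := by
  have hcard : ∀ D', PairedDom (GP5 H) D' → 4 * Fintype.card α ≤ #D' := fun D' hD' =>
    D'.mul_card_le_card_of_le_card_filter (fun a v => ∃ k : Fin 5, v = Sum.inr (a, k))
      (fun v a b ⟨_, ha⟩ ⟨_, hb⟩ => (by simpa using ha.symm.trans hb : a = b ∧ _).1)
      fun a => gp5_four_le_card_filter hD' a
  refine ⟨fun a => gp5_four_le_card_filter hD a, hcard D hD, le_csInf ⟨_, D, hD, rfl⟩ ?_⟩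
  rintro k ⟨D', hD', rfl⟩
  exact hcard D' hD'

open scoped Classical in
/-- Every paired dominating set of the GP5-graph contains at least four
vertices from `{a_i, b_i, c_i, d_i, e_i}` for each vertex `i` of `H`; hence
`γ_{pr}(G) ≥ 4n`. -/
theorem gp5_pairedDom_lower {α : Type*} [Fintype α] [DecidableEq α]
    (H : SimpleGraph α) (hH : H.Connected)
    (D : Finset (α ⊕ α × Fin 5)) (hD : PairedDom (GP5 H) D) :
    (∀ a : α, 4 ≤ (D.filter fun v => ∃ k : Fin 5, v = Sum.inr (a, k)).card) ∧
    4 * Fintype.card α ≤ D.card ∧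
    4 * Fintype.card α ≤ pairedDomNum (α ⊕ α × Fin 5) (GP5 H) :=
  gp5_pairedDom_lower_general H D hD
end

section
/- Let G be a GP5-graph constructed from a connected graph H with n vertices. If H has a semipaired dominating set of cardinality at most k (k ≤ n), then G has a semipaired dominating set of cardinality at most 2n + k. -/
open SimpleGraph Finset

/-! Keep the semipaired dominating set `D` of `H` on the copy of `H`, and add the two vertices
`b_a, d_a` of every pendant path. They dominate the whole path `a_a b_a c_a d_a e_a`, and they
form a pair at distance two through `c_a`, so `D` together with all of them is a semipaired
dominating set of `GP5 H` of size `|D| + 2n`. -/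

namespace GP5

variable {α : Type*} {H : SimpleGraph α}

lemma adj_inl {a b : α} (h : H.Adj a b) : (GP5 H).Adj (Sum.inl a) (Sum.inl b) :=
  ⟨by simp [h.ne], Or.inl (Or.inl ⟨a, b, rfl, rfl, h⟩)⟩

lemma adj_inr_of_val_eq_succ (a : α) {j k : Fin 5} (h : (k : ℕ) = j + 1) :
    (GP5 H).Adj (Sum.inr (a, j)) (Sum.inr (a, k)) := by
  refine ⟨?_, Or.inl (Or.inr (Or.inr ⟨a, j, k, rfl, rfl, h⟩))⟩
  simp only [ne_eq, Sum.inr.injEq, Prod.mk.injEq, not_and]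
  rintro - rfl
  omega

lemma exists_pendant_dominator (a : α) (j : Fin 5) :
    ∃ i ∈ ({1, 3} : Finset (Fin 5)),
      i = j ∨ (GP5 H).Adj (Sum.inr (a, i)) (Sum.inr (a, j)) := by
  fin_cases j
  · exact ⟨1, by decide, Or.inr (adj_inr_of_val_eq_succ a rfl).symm⟩
  · exact ⟨1, by decide, Or.inl rfl⟩
  · exact ⟨1, by decide, Or.inr (adj_inr_of_val_eq_succ a rfl)⟩
  · exact ⟨3, by decide, Or.inl rfl⟩
  · exact ⟨3, by decide, Or.inr (adj_inr_of_val_eq_succ a rfl)⟩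

lemma adj_adj_pendant_swap (a : α) {j : Fin 5} (hj : j ∈ ({1, 3} : Finset (Fin 5))) :
    ∃ w, (GP5 H).Adj (Sum.inr (a, j)) w ∧ (GP5 H).Adj w (Sum.inr (a, Equiv.swap 1 3 j)) := by
  refine ⟨Sum.inr (a, 2), ?_⟩
  rcases Finset.mem_insert.1 hj with rfl | hj
  · exact ⟨adj_inr_of_val_eq_succ a rfl, adj_inr_of_val_eq_succ a rfl⟩
  · rw [Finset.mem_singleton.1 hj]
    exact ⟨(adj_inr_of_val_eq_succ a rfl).symm, (adj_inr_of_val_eq_succ a rfl).symm⟩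

variable [Fintype α]

/-- `D` on the copy of `H`, together with `b_a = (a, 1)` and `d_a = (a, 3)` for every `a`. -/
def extend (D : Finset α) : Finset (α ⊕ α × Fin 5) :=
  D.disjSum (univ ×ˢ {1, 3})

lemma card_extend (D : Finset α) : #(extend D) = #D + 2 * Fintype.card α := by
  simp [extend, card_disjSum, card_product, mul_comm]

lemma dominating_extend {D : Finset α} (hD : Dominating H D) : Dominating (GP5 H) (extend D) := by
  rintro (v | ⟨a, j⟩)
  · obtain ⟨u, hu, rfl | huv⟩ := hD v
    · exact ⟨Sum.inl u, inl_mem_disjSum.2 hu, Or.inl rfl⟩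
    · exact ⟨Sum.inl u, inl_mem_disjSum.2 hu, Or.inr (adj_inl huv)⟩
  · obtain ⟨i, hi, hij⟩ := exists_pendant_dominator (H := H) a j
    exact ⟨Sum.inr (a, i), inr_mem_disjSum.2 (mem_product.2 ⟨mem_univ a, hi⟩),
      hij.imp (congrArg _ ∘ congrArg _) id⟩

lemma semiPairedDom_extend {D : Finset α} (hD : SemiPairedDom H D) :
    SemiPairedDom (GP5 H) (extend D) := by
  obtain ⟨hdom, f, hf_mem, hf_invol, hf_ne, hf_near⟩ := hD
  have hswap_mem :
      ∀ j ∈ ({1, 3} : Finset (Fin 5)), Equiv.swap 1 3 j ∈ ({1, 3} : Finset (Fin 5)) := by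
    decide
  have hswap_ne : ∀ j ∈ ({1, 3} : Finset (Fin 5)), Equiv.swap 1 3 j ≠ j := by decide
  refine ⟨dominating_extend hdom, Sum.map f (Prod.map id (Equiv.swap 1 3)), ?_, ?_, ?_, ?_⟩ <;>
    rintro (v | ⟨a, j⟩) hu <;>
    simp only [extend, inl_mem_disjSum, inr_mem_disjSum, mem_product, mem_univ, true_and] at hu
  · exact inl_mem_disjSum.2 (hf_mem v hu)
  · exact inr_mem_disjSum.2 (mem_product.2 ⟨mem_univ a, hswap_mem j hu⟩)
  · simp [hf_invol v hu]
  · simp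
  · simpa using hf_ne v hu
  · simpa using hswap_ne j hu
  · rcases hf_near v hu with h | ⟨w, huw, hwv⟩
    · exact Or.inl (adj_inl h)
    · exact Or.inr ⟨Sum.inl w, adj_inl huw, adj_inl hwv⟩
  · exact Or.inr (adj_adj_pendant_swap a hu)

end GP5

theorem gp5_semiPairedDom_of_semiPairedDom_general {α : Type*} [Fintype α]
    (H : SimpleGraph α)
    (k : ℕ)
    (h : ∃ D : Finset α, SemiPairedDom H D ∧ D.card ≤ k) :
    ∃ D' : Finset (α ⊕ α × Fin 5),
      SemiPairedDom (GP5 H) D' ∧ D'.card ≤ 2 * Fintype.card α + k := by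
  obtain ⟨D, hD, hcard⟩ := h
  refine ⟨GP5.extend D, GP5.semiPairedDom_extend hD, ?_⟩
  rw [GP5.card_extend]
  omega

/-- If `H` (connected, no isolated vertices, `n` vertices) has a semipaired
dominating set of size at most `k ≤ n`, then its GP5-graph has a semipaired dominating
set of size at most `2n + k`. -/
theorem gp5_semiPairedDom_of_semiPairedDom {α : Type*} [Fintype α] [DecidableEq α]
    (H : SimpleGraph α) (hH : H.Connected) (hiso : ∀ v : α, ∃ u : α, H.Adj u v)
    (k : ℕ) (hk : k ≤ Fintype.card α)
    (h : ∃ D : Finset α, SemiPairedDom H D ∧ D.card ≤ k) :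
    ∃ D' : Finset (α ⊕ α × Fin 5),
      SemiPairedDom (GP5 H) D' ∧ D'.card ≤ 2 * Fintype.card α + k :=
  gp5_semiPairedDom_of_semiPairedDom_general H k h
end

section
/- Let G be a GP5-graph constructed from a connected graph H with n vertices. If G has a semipaired dominating set of cardinality at most 2n + k (k ≤ n), then H has a semipaired dominating set of cardinality at most k. -/
open SimpleGraph Finset

/-!
Call `v_a = inl a` and `c_a = inr (a, 2)` the hubs of the gadget of `a`, and its four other
vertices its arm. Arm vertices are within distance two only of their own gadget, and the arm must
contain a dominator of each of the leaves `a_a`, `e_a`, so `D'` spends at least two arm vertices on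
every gadget. The set `D₀` of vertices of `H` whose gadget has a hub in `D'` dominates `H`. Call
`a ∈ D₀` good if its gadget has exactly one hub in `D'` and that hub is paired with a hub of another
gadget `b`; then `b ∈ D₀` is within distance two of `a` in `H`. A lone hub paired inside its own
gadget forces a third arm vertex, so `2n + |D₀| + |D₀ \ good| ≤ |D'|`. The map `a ↦ b` on good
vertices has fibres of size at most two, so all of `D₀` but at most `|D₀ \ good|` vertices can be
paired; each remaining vertex is either dropped or paired with a fresh neighbour.
-/

namespace SimpleGraph

variable {V : Type*} (G : SimpleGraph V)

def Near (u v : V) : Prop := G.Adj u v ∨ ∃ w, G.Adj u w ∧ G.Adj w v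

def IsSemiPairing (D : Finset V) (f : V → V) : Prop :=
  ∀ u ∈ D, f u ∈ D ∧ f (f u) = u ∧ f u ≠ u ∧ G.Near u (f u)

variable {G}

lemma Near.symm {u v : V} : G.Near u v → G.Near v u
  | .inl h => .inl h.symm
  | .inr ⟨w, h₁, h₂⟩ => .inr ⟨w, h₂.symm, h₁.symm⟩

end SimpleGraph

section Pairing

variable {V : Type*} {G : SimpleGraph V}

lemma semiPairedDom_iff {D : Finset V} :
    SemiPairedDom G D ↔ Dominating G D ∧ ∃ f, G.IsSemiPairing D f := by
  refine and_congr_right fun _ => exists_congr fun f => ?_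
  exact ⟨fun ⟨h₁, h₂, h₃, h₄⟩ u hu => ⟨h₁ u hu, h₂ u hu, h₃ u hu, h₄ u hu⟩,
    fun h => ⟨fun u hu => (h u hu).1, fun u hu => (h u hu).2.1, fun u hu => (h u hu).2.2.1,
      fun u hu => (h u hu).2.2.2⟩⟩

lemma Dominating.mono {D D₁ : Finset V} (hD : Dominating G D) (h : D ⊆ D₁) : Dominating G D₁ :=
  fun v => (hD v).imp fun _ ⟨hu, huv⟩ => ⟨h hu, huv⟩

variable [DecidableEq V]

lemma SimpleGraph.IsSemiPairing.insert_pair {P : Finset V} {g : V → V}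
    (hg : G.IsSemiPairing P g) {x y : V} (hx : x ∉ P) (hy : y ∉ P) (hxy : x ≠ y)
    (hnear : G.Near x y) :
    G.IsSemiPairing (insert x (insert y P))
      (fun a => if a = x then y else if a = y then x else g a) := by
  intro u hu
  rcases mem_insert.1 hu with rfl | hu
  · simp [hxy.symm, hnear]
  rcases mem_insert.1 hu with rfl | hu
  · simp [hxy, hxy.symm, hnear.symm]
  obtain ⟨hgu, hggu, hne, hnear⟩ := hg u hu
  have hux : u ≠ x := fun h => hx (h ▸ hu)
  have huy : u ≠ y := fun h => hy (h ▸ hu)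
  have hgux : g u ≠ x := fun h => hx (h ▸ hgu)
  have hguy : g u ≠ y := fun h => hy (h ▸ hgu)
  simp [hux, huy, hgux, hguy, hgu, hggu, hne, hnear]

lemma exists_adj_notMem_of_not_dominating_erase (hiso : ∀ v, ∃ u, G.Adj u v) {D : Finset V}
    (hD : Dominating G D) {ℓ : V} (hℓ : ¬ Dominating G (D.erase ℓ)) : ∃ w ∉ D, G.Adj ℓ w := by
  simp only [Dominating, not_forall, not_exists, not_and] at hℓ
  obtain ⟨v, hv⟩ := hℓ
  obtain ⟨u, hu, huv⟩ := hD v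
  obtain rfl : u = ℓ := by_contra fun h => hv u (mem_erase.2 ⟨h, hu⟩) huv
  rcases huv with rfl | hadj
  · obtain ⟨w, hw⟩ := hiso u
    exact ⟨w, fun hwD => hv w (mem_erase.2 ⟨hw.ne, hwD⟩) (.inr hw), hw.symm⟩
  · exact ⟨v, fun hvD => hv v (mem_erase.2 ⟨hadj.ne.symm, hvD⟩) (.inl rfl), hadj⟩

theorem exists_semiPairedDom_card_le_of_isSemiPairing (hiso : ∀ v, ∃ u, G.Adj u v)
    {D P : Finset V} (hD : Dominating G D) (hPD : P ⊆ D) {g : V → V} (hg : G.IsSemiPairing P g) :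
    ∃ D₁, SemiPairedDom G D₁ ∧ #D₁ ≤ #D + #(D \ P) := by
  generalize hn : #(D \ P) = n
  induction n generalizing D P g with
  | zero =>
    obtain rfl : D = P := (sdiff_eq_empty_iff_subset.1 (card_eq_zero.1 hn)).antisymm hPD
    exact ⟨D, semiPairedDom_iff.2 ⟨hD, g, hg⟩, by omega⟩
  | succ n ih =>
    obtain ⟨ℓ, hℓ⟩ : (D \ P).Nonempty := card_pos.1 (by omega)
    obtain ⟨hℓD, hℓP⟩ := mem_sdiff.1 hℓ
    have hcard : #((D \ P).erase ℓ) = n := by rw [card_erase_of_mem hℓ, hn]; rfl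
    by_cases hdrop : Dominating G (D.erase ℓ)
    · obtain ⟨D₁, h₁, hD₁⟩ := ih hdrop (fun a ha => mem_erase.2 ⟨fun h => hℓP (h ▸ ha), hPD ha⟩)
        hg (by rwa [erase_sdiff_comm])
      refine ⟨D₁, h₁, hD₁.trans ?_⟩
      have := card_erase_of_mem hℓD
      have := card_pos.2 ⟨ℓ, hℓD⟩
      omega
    · obtain ⟨w, hwD, hadj⟩ := exists_adj_notMem_of_not_dominating_erase hiso hD hdrop
      have hwP : w ∉ P := fun h => hwD (hPD h)
      obtain ⟨D₁, h₁, hD₁⟩ := ih (hD.mono (subset_insert w D))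
        (insert_subset_insert w (insert_subset hℓD hPD))
        (hg.insert_pair hwP hℓP hadj.ne.symm (.inl hadj.symm))
        (by rwa [insert_sdiff_insert, sdiff_insert,
          erase_eq_of_notMem fun h => hwD (mem_sdiff.1 h).1, sdiff_insert])
      refine ⟨D₁, h₁, hD₁.trans ?_⟩
      rw [card_insert_of_notMem hwD]
      omega

variable {D S : Finset V} {φ : V → V}

noncomputable def fiberRep (S : Finset V) (φ : V → V) (b : V) : V :=
  if h : ∃ a ∈ S, φ a = b then h.choose else b

lemma fiberRep_spec {b : V} (h : ∃ a ∈ S, φ a = b) :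
    fiberRep S φ b ∈ S ∧ φ (fiberRep S φ b) = b := by
  rw [fiberRep, dif_pos h]
  exact h.choose_spec

noncomputable def matchedPart (D S : Finset V) (φ : V → V) : Finset V :=
  {a ∈ S | φ a ∈ S ∨ fiberRep S φ (φ a) = a} ∪ {b ∈ D \ S | ∃ a ∈ S, φ a = b}

noncomputable def matchedPartner (S : Finset V) (φ : V → V) (a : V) : V :=
  if a ∈ S then φ a else fiberRep S φ a

lemma isSemiPairing_matchedPart (hφD : ∀ a ∈ S, φ a ∈ D) (hφne : ∀ a ∈ S, φ a ≠ a)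
    (hφnear : ∀ a ∈ S, G.Near a (φ a)) (hφinv : ∀ a ∈ S, φ a ∈ S → φ (φ a) = a) :
    G.IsSemiPairing (matchedPart D S φ) (matchedPartner S φ) := by
  intro u hu
  rcases mem_union.1 hu with hu | hu
  · obtain ⟨huS, hrep⟩ := mem_filter.1 hu
    rw [matchedPartner, if_pos huS]
    by_cases hφS : φ u ∈ S
    · rw [matchedPartner, if_pos hφS, hφinv u huS hφS]
      refine ⟨mem_union_left _ (mem_filter.2 ⟨hφS, .inl ?_⟩), rfl, hφne u huS, hφnear u huS⟩
      rwa [hφinv u huS hφS]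
    · have hrep : fiberRep S φ (φ u) = u := hrep.resolve_left hφS
      rw [matchedPartner, if_neg hφS, hrep]
      exact ⟨mem_union_right _ (mem_filter.2 ⟨mem_sdiff.2 ⟨hφD u huS, hφS⟩, u, huS, rfl⟩), rfl,
        hφne u huS, hφnear u huS⟩
  · obtain ⟨huDS, hpre⟩ := mem_filter.1 hu
    obtain ⟨huD, huS⟩ := mem_sdiff.1 huDS
    obtain ⟨hrS, hφr⟩ := fiberRep_spec hpre
    rw [matchedPartner, if_neg huS, matchedPartner, if_pos hrS, hφr]
    refine ⟨mem_union_left _ (mem_filter.2 ⟨hrS, .inr (by rw [hφr])⟩), rfl,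
      fun h => huS (h ▸ hrS), ?_⟩
    simpa only [hφr] using (hφnear _ hrS).symm

lemma card_sdiff_matchedPart_le (hφD : ∀ a ∈ S, φ a ∈ D)
    (hfib : ∀ b, #{a ∈ S | φ a = b} ≤ 2) :
    #(D \ matchedPart D S φ) ≤ #(D \ S) := by
  have hgood : ∀ a ∈ D \ matchedPart D S φ, a ∈ S → φ a ∉ S ∧ fiberRep S φ (φ a) ≠ a :=
    fun a ha haS => by simpa [matchedPart, haS] using (mem_sdiff.1 ha).2
  have hbad : ∀ a ∈ D \ matchedPart D S φ, a ∉ S → ∀ x ∈ S, φ x ≠ a :=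
    fun a ha haS => by simpa [matchedPart, haS, (mem_sdiff.1 ha).1] using (mem_sdiff.1 ha).2
  -- An unmatched vertex of `S` is charged to its image, which lies outside `S`, any other unmatched
  -- vertex to itself. A vertex outside `S` with a preimage is matched, and it has at most two
  -- preimages, one of which is matched to it, so no vertex is charged twice.
  refine card_le_card_of_injOn (fun a => if a ∈ S then φ a else a) (fun a ha => ?_) ?_
  · by_cases haS : a ∈ S
    · simpa [haS, hφD a haS] using (hgood a ha haS).1
    · simpa [haS] using (mem_sdiff.1 ha).1
  · intro a ha a' ha' h
    by_cases haS : a ∈ S <;> by_cases ha'S : a' ∈ S <;>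
      simp only [haS, ha'S, if_true, if_false] at h
    · by_contra hne
      have hpre : ∃ x ∈ S, φ x = φ a := ⟨a, haS, rfl⟩
      obtain ⟨hrS, hφr⟩ := fiberRep_spec hpre
      have : 2 < #{x ∈ S | φ x = φ a} := two_lt_card_iff.2 ⟨a, a', fiberRep S φ (φ a),
        by simp [haS], by simp [ha'S, h], by simp [hrS, hφr], hne, (hgood a ha haS).2.symm,
        by rw [h]; exact (hgood a' ha' ha'S).2.symm⟩
      exact (hfib _).not_gt this
    · exact absurd h (hbad a' ha' ha'S a haS)
    · exact absurd h.symm (hbad a ha haS a' ha'S)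
    · exact h

theorem exists_semiPairedDom_card_le_of_nearMap (hiso : ∀ v, ∃ u, G.Adj u v)
    (hD : Dominating G D) (hSD : S ⊆ D)
    (hφD : ∀ a ∈ S, φ a ∈ D) (hφne : ∀ a ∈ S, φ a ≠ a) (hφnear : ∀ a ∈ S, G.Near a (φ a))
    (hφinv : ∀ a ∈ S, φ a ∈ S → φ (φ a) = a) (hfib : ∀ b, #{a ∈ S | φ a = b} ≤ 2) :
    ∃ D₁, SemiPairedDom G D₁ ∧ #D₁ ≤ #D + #(D \ S) := by
  have hPD : matchedPart D S φ ⊆ D :=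
    union_subset ((filter_subset _ _).trans hSD) ((filter_subset _ _).trans sdiff_subset)
  obtain ⟨D₁, h₁, hcard⟩ := exists_semiPairedDom_card_le_of_isSemiPairing hiso hD hPD
    (isSemiPairing_matchedPart hφD hφne hφnear hφinv)
  exact ⟨D₁, h₁, hcard.trans (by grw [card_sdiff_matchedPart_le hφD hfib])⟩

end Pairing

namespace GP5

variable {α : Type*} {H : SimpleGraph α}

@[simp]
lemma adj_inl_inl {a b : α} : (GP5 H).Adj (.inl a) (.inl b) ↔ H.Adj a b := by
  simp only [GP5, fromRel_adj]
  grind [SimpleGraph.adj_comm, SimpleGraph.Adj.ne]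

@[simp]
lemma adj_inl_inr {a b : α} {j : Fin 5} :
    (GP5 H).Adj (.inl a) (.inr (b, j)) ↔ b = a ∧ j = 2 := by
  simp [GP5]

@[simp]
lemma adj_inr_inl {a b : α} {j : Fin 5} :
    (GP5 H).Adj (.inr (a, j)) (.inl b) ↔ a = b ∧ j = 2 := by
  simp [GP5]

@[simp]
lemma adj_inr_inr {a b : α} {j k : Fin 5} :
    (GP5 H).Adj (.inr (a, j)) (.inr (b, k)) ↔ a = b ∧ ((j : ℕ) + 1 = k ∨ (k : ℕ) + 1 = j) := by
  simp only [GP5, fromRel_adj]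
  grind

def base : α ⊕ α × Fin 5 → α := Sum.elim id Prod.fst

def IsHub : α ⊕ α × Fin 5 → Prop
  | .inl _ => True
  | .inr p => p.2 = 2

instance : DecidablePred (IsHub (α := α)) := fun u => by
  cases u <;> unfold IsHub <;> infer_instance

@[simp] lemma base_inl (a : α) : base (.inl a : α ⊕ α × Fin 5) = a := rfl
@[simp] lemma base_inr (p : α × Fin 5) : base (.inr p) = p.1 := rfl
@[simp] lemma isHub_inl (a : α) : IsHub (.inl a : α ⊕ α × Fin 5) := trivial
@[simp] lemma isHub_inr (p : α × Fin 5) : IsHub (.inr p) ↔ p.2 = 2 := Iff.rfl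

lemma near_of_base_ne {u v : α ⊕ α × Fin 5} (h : (GP5 H).Near u v) (hne : base u ≠ base v) :
    IsHub u ∧ IsHub v ∧ H.Near (base u) (base v) := by
  rcases h with h | ⟨w, h₁, h₂⟩
  · rcases u with a | ⟨a, i⟩ <;> rcases v with b | ⟨b, j⟩ <;> simp_all [Near]
  · rcases u with a | ⟨a, i⟩ <;> rcases v with b | ⟨b, j⟩ <;> rcases w with c | ⟨c, l⟩
    case inl.inl.inl => exact ⟨trivial, trivial, .inr ⟨c, adj_inl_inl.1 h₁, adj_inl_inl.1 h₂⟩⟩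
    all_goals simp_all [Near]

variable {D : Finset (α ⊕ α × Fin 5)}

lemma exists_low_mem (hD : Dominating (GP5 H) D) (a : α) :
    ∃ i : Fin 5, (i : ℕ) < 2 ∧ .inr (a, i) ∈ D := by
  obtain ⟨u, hu, rfl | hadj⟩ := hD (.inr (a, 0))
  · exact ⟨0, by decide, hu⟩
  · rcases u with b | ⟨b, i⟩
    · simp at hadj
    · simp only [adj_inr_inr] at hadj
      obtain ⟨rfl, hi⟩ := hadj
      exact ⟨i, by omega, hu⟩

lemma exists_high_mem (hD : Dominating (GP5 H) D) (a : α) :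
    ∃ i : Fin 5, 2 < (i : ℕ) ∧ .inr (a, i) ∈ D := by
  obtain ⟨u, hu, rfl | hadj⟩ := hD (.inr (a, 4))
  · exact ⟨4, by decide, hu⟩
  · rcases u with b | ⟨b, i⟩
    · simp at hadj
    · simp only [adj_inr_inr] at hadj
      obtain ⟨rfl, hi⟩ := hadj
      exact ⟨i, by omega, hu⟩

variable [DecidableEq α] {f : α ⊕ α × Fin 5 → α ⊕ α × Fin 5}

def hubs (D : Finset (α ⊕ α × Fin 5)) (a : α) : Finset (α ⊕ α × Fin 5) :=
  {u ∈ D | base u = a ∧ IsHub u}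

def arm (D : Finset (α ⊕ α × Fin 5)) (a : α) : Finset (α ⊕ α × Fin 5) :=
  {u ∈ D | base u = a ∧ ¬ IsHub u}

lemma card_fiber_eq (a : α) : #{u ∈ D | base u = a} = #(hubs D a) + #(arm D a) := by
  rw [hubs, arm, ← filter_filter, ← filter_filter, card_filter_add_card_filter_not]

lemma card_hubs_le_two (a : α) : #(hubs D a) ≤ 2 := by
  have hsub : hubs D a ⊆ {.inl a, .inr (a, 2)} := by
    intro u hu
    simp only [hubs, mem_filter] at hu
    rcases u with b | ⟨b, i⟩ <;> simp_all
  exact (card_le_card hsub).trans card_le_two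

lemma two_le_card_arm (hD : Dominating (GP5 H) D) (a : α) : 2 ≤ #(arm D a) := by
  have mem_arm : ∀ {i : Fin 5}, .inr (a, i) ∈ D → (i : ℕ) ≠ 2 → .inr (a, i) ∈ arm D a :=
    fun hiD hi => mem_filter.2 ⟨hiD, rfl, fun h => hi (congrArg Fin.val h)⟩
  obtain ⟨i, hi, hiD⟩ := exists_low_mem hD a
  obtain ⟨j, hj, hjD⟩ := exists_high_mem hD a
  refine one_lt_card.2 ⟨_, mem_arm hiD (by omega), _, mem_arm hjD (by omega), fun h => ?_⟩
  have := congrArg Fin.val (Prod.mk.inj (Sum.inr_injective h)).2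
  omega

lemma three_le_card_arm (hD : Dominating (GP5 H) D) (hf : (GP5 H).IsSemiPairing D f)
    {a : α} {t : α ⊕ α × Fin 5} (ht : hubs D a = {t}) (hft : base (f t) = a) :
    3 ≤ #(arm D a) := by
  have mem_hubs : ∀ {u}, u ∈ D → base u = a → IsHub u → u = t := fun hu hb hh =>
    mem_singleton.1 (ht ▸ mem_filter.2 ⟨hu, hb, hh⟩)
  obtain ⟨htD, htb, hth⟩ : t ∈ D ∧ base t = a ∧ IsHub t := by
    simpa [hubs] using (ht ▸ mem_singleton_self t : t ∈ hubs D a)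
  obtain ⟨hftD, hfft, hftne, -⟩ := hf t htD
  have hft_arm : f t ∈ arm D a :=
    mem_filter.2 ⟨hftD, hft, fun hh => hftne (mem_hubs hftD hft hh)⟩
  obtain ⟨z, hz, hzne⟩ := exists_mem_ne (two_le_card_arm hD a) (f t)
  obtain ⟨hzD, hzb, hzh⟩ := mem_filter.1 hz
  obtain ⟨hfzD, hffz, hfzne, hfznear⟩ := hf z hzD
  have hfzb : base (f z) = a := by
    by_contra hne
    exact hzh (near_of_base_ne hfznear (hzb ▸ Ne.symm hne)).1
  have hfz_arm : f z ∈ arm D a := by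
    refine mem_filter.2 ⟨hfzD, hfzb, fun hh => hzne ?_⟩
    rw [← hffz, mem_hubs hfzD hfzb hh]
  refine two_lt_card_iff.2 ⟨f t, z, f z, hft_arm, hz, hfz_arm, hzne.symm, ?_, hfzne.symm⟩
  intro h
  apply hzh
  rw [← hffz, ← h, hfft]
  exact hth

variable {a : α}

def hubOf (D : Finset (α ⊕ α × Fin 5)) (a : α) : α ⊕ α × Fin 5 :=
  if .inl a ∈ D then .inl a else .inr (a, 2)

@[simp] lemma base_hubOf : base (hubOf D a) = a := by
  unfold hubOf; split <;> rfl

lemma hubOf_mem_hubs (h : (hubs D a).Nonempty) : hubOf D a ∈ hubs D a := by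
  obtain ⟨u, hu⟩ := h
  obtain ⟨huD, rfl, hhub⟩ := mem_filter.1 hu
  unfold hubOf
  split_ifs with hinl
  · exact mem_filter.2 ⟨hinl, rfl, trivial⟩
  · rcases u with b | ⟨b, i⟩
    · exact absurd huD hinl
    · obtain rfl : i = 2 := hhub
      exact mem_filter.2 ⟨huD, rfl, rfl⟩

lemma hubs_eq_singleton (h : #(hubs D a) = 1) : hubs D a = {hubOf D a} := by
  obtain ⟨t, ht⟩ := card_eq_one.1 h
  have := hubOf_mem_hubs (ht ▸ singleton_nonempty t)
  rw [ht, mem_singleton] at this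
  rw [ht, this]

def partnerBase (D : Finset (α ⊕ α × Fin 5)) (f : α ⊕ α × Fin 5 → α ⊕ α × Fin 5) (a : α) : α :=
  base (f (hubOf D a))

def IsGood (D : Finset (α ⊕ α × Fin 5)) (f : α ⊕ α × Fin 5 → α ⊕ α × Fin 5) (a : α) : Prop :=
  #(hubs D a) = 1 ∧ partnerBase D f a ≠ a

instance : DecidablePred (IsGood D f) := fun _ => by unfold IsGood; infer_instance

lemma IsGood.hubs_nonempty (ha : IsGood D f a) : (hubs D a).Nonempty :=
  card_pos.1 (by rw [ha.1]; exact one_pos)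

lemma IsGood.partner_mem_hubs_and_near (hf : (GP5 H).IsSemiPairing D f) (ha : IsGood D f a) :
    f (hubOf D a) ∈ hubs D (partnerBase D f a) ∧ H.Near a (partnerBase D f a) := by
  obtain ⟨htD, -, -⟩ := mem_filter.1 (hubOf_mem_hubs ha.hubs_nonempty)
  obtain ⟨hftD, -, -, hnear⟩ := hf _ htD
  have hbase : base (hubOf D a) ≠ base (f (hubOf D a)) := by
    simpa [partnerBase, eq_comm] using ha.2
  obtain ⟨-, hhub, hHnear⟩ := near_of_base_ne hnear hbase
  rw [base_hubOf] at hHnear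
  exact ⟨mem_filter.2 ⟨hftD, rfl, hhub⟩, hHnear⟩

lemma partnerBase_partnerBase (hf : (GP5 H).IsSemiPairing D f) (ha : IsGood D f a)
    (hb : IsGood D f (partnerBase D f a)) : partnerBase D f (partnerBase D f a) = a := by
  have hmem := (ha.partner_mem_hubs_and_near hf).1
  rw [hubs_eq_singleton hb.1, mem_singleton] at hmem
  have htD := (mem_filter.1 (hubOf_mem_hubs ha.hubs_nonempty)).1
  rw [partnerBase, ← hmem, (hf _ htD).2.1, base_hubOf]

lemma card_filter_partnerBase_le_two (hf : (GP5 H).IsSemiPairing D f) {S : Finset α}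
    (hS : ∀ a ∈ S, IsGood D f a) (b : α) : #{a ∈ S | partnerBase D f a = b} ≤ 2 := by
  refine (card_le_card_of_injOn (fun a => f (hubOf D a)) (fun a ha => ?_) ?_).trans
    (card_hubs_le_two (D := D) b)
  · obtain ⟨haS, rfl⟩ := mem_filter.1 ha
    exact ((hS a haS).partner_mem_hubs_and_near hf).1
  · intro a ha a' ha' h
    have hhubD : ∀ {x}, x ∈ ({a ∈ S | partnerBase D f a = b} : Finset α) → hubOf D x ∈ D :=
      fun hx => (mem_filter.1 (hubOf_mem_hubs (hS _ (mem_filter.1 hx).1).hubs_nonempty)).1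
    have := congrArg (base ∘ f) h
    simpa [(hf _ (hhubD ha)).2.1, (hf _ (hhubD ha')).2.1] using this

lemma two_add_le_card_fiber (hD : Dominating (GP5 H) D) (hf : (GP5 H).IsSemiPairing D f)
    (a : α) :
    2 + (if (hubs D a).Nonempty then 1 else 0) +
      (if (hubs D a).Nonempty ∧ ¬ IsGood D f a then 1 else 0) ≤ #{u ∈ D | base u = a} := by
  rw [card_fiber_eq]
  have harm := two_le_card_arm hD a
  have hhubs := card_hubs_le_two (D := D) a
  by_cases hne : (hubs D a).Nonempty
  swap
  · simp only [hne, if_false, false_and]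
    omega
  have hpos := card_pos.2 hne
  by_cases hgood : IsGood D f a
  · simp only [hne, hgood, if_true, not_true_eq_false, and_false, if_false]
    omega
  simp only [hne, hgood, if_true, not_false_eq_true, and_self]
  by_cases hone : #(hubs D a) = 1
  · have hfix : partnerBase D f a = a := by simpa [IsGood, hone] using hgood
    have := three_le_card_arm hD hf (hubs_eq_singleton hone) hfix
    omega
  · omega

variable [Fintype α]

def hubBases (D : Finset (α ⊕ α × Fin 5)) : Finset α := {a | (hubs D a).Nonempty}

def goodBases (D : Finset (α ⊕ α × Fin 5)) (f : α ⊕ α × Fin 5 → α ⊕ α × Fin 5) : Finset α :=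
  {a | IsGood D f a}

lemma dominating_hubBases (hD : Dominating (GP5 H) D) : Dominating H (hubBases D) := by
  intro v
  obtain ⟨u, hu, huv⟩ := hD (.inl v)
  rcases u with b | ⟨b, i⟩
  · exact ⟨b, by simpa [hubBases] using ⟨_, mem_filter.2 ⟨hu, rfl, trivial⟩⟩, by simpa using huv⟩
  · simp only [reduceCtorEq, adj_inr_inl, false_or] at huv
    obtain ⟨rfl, rfl⟩ := huv
    exact ⟨b, by simpa [hubBases] using ⟨_, mem_filter.2 ⟨hu, rfl, rfl⟩⟩, .inl rfl⟩

lemma card_add_card_sdiff_goodBases_le (hD : Dominating (GP5 H) D)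
    (hf : (GP5 H).IsSemiPairing D f) :
    2 * Fintype.card α + #(hubBases D) + #(hubBases D \ goodBases D f) ≤ #D := by
  calc 2 * Fintype.card α + #(hubBases D) + #(hubBases D \ goodBases D f)
      = ∑ a, (2 + (if (hubs D a).Nonempty then 1 else 0) +
          (if (hubs D a).Nonempty ∧ ¬ IsGood D f a then 1 else 0)) := by
        simp [hubBases, goodBases, sum_add_distrib, sum_boole, mul_comm, filter_and_not]
    _ ≤ ∑ a, #{u ∈ D | base u = a} := sum_le_sum fun a _ => two_add_le_card_fiber hD hf a
    _ = #D := (card_eq_sum_card_fiberwise fun _ _ => mem_univ _).symm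

theorem exists_semiPairedDom_card_le (hiso : ∀ v, ∃ u, H.Adj u v)
    (hD : SemiPairedDom (GP5 H) D) :
    ∃ D₁, SemiPairedDom H D₁ ∧ 2 * Fintype.card α + #D₁ ≤ #D := by
  obtain ⟨hdom, f, hf⟩ := semiPairedDom_iff.1 hD
  have hgood : ∀ a ∈ goodBases D f, IsGood D f a := fun a ha => by simpa [goodBases] using ha
  obtain ⟨D₁, h₁, hcard⟩ := exists_semiPairedDom_card_le_of_nearMap hiso
    (dominating_hubBases hdom) (φ := partnerBase D f)
    (fun a ha => by simpa [hubBases] using (hgood a ha).hubs_nonempty)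
    (fun a ha => by simpa [hubBases] using ⟨_, ((hgood a ha).partner_mem_hubs_and_near hf).1⟩)
    (fun a ha => (hgood a ha).2)
    (fun a ha => ((hgood a ha).partner_mem_hubs_and_near hf).2)
    (fun a ha hb => partnerBase_partnerBase hf (hgood a ha) (hgood _ hb))
    (card_filter_partnerBase_le_two hf hgood)
  exact ⟨D₁, h₁, by have := card_add_card_sdiff_goodBases_le hdom hf; omega⟩

end GP5

theorem gp5_semiPairedDom_reverse_general {α : Type*} [Fintype α] [DecidableEq α]
    (H : SimpleGraph α) (hiso : ∀ v : α, ∃ u : α, H.Adj u v)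
    (k : ℕ)
    (h : ∃ D' : Finset (α ⊕ α × Fin 5),
      SemiPairedDom (GP5 H) D' ∧ D'.card ≤ 2 * Fintype.card α + k) :
    ∃ D : Finset α, SemiPairedDom H D ∧ D.card ≤ k := by
  obtain ⟨D', hD', hcard⟩ := h
  obtain ⟨D, hD, hDcard⟩ := GP5.exists_semiPairedDom_card_le hiso hD'
  exact ⟨D, hD, by omega⟩

/-- If the GP5-graph of `H` (connected, no isolated vertices, `n` vertices)
has a semipaired dominating set of size at most `2n + k` with `k ≤ n`, then `H` has a
semipaired dominating set of size at most `k`. -/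
theorem gp5_semiPairedDom_reverse {α : Type*} [Fintype α] [DecidableEq α]
    (H : SimpleGraph α) (hH : H.Connected) (hiso : ∀ v : α, ∃ u : α, H.Adj u v)
    (k : ℕ) (hk : k ≤ Fintype.card α)
    (h : ∃ D' : Finset (α ⊕ α × Fin 5),
      SemiPairedDom (GP5 H) D' ∧ D'.card ≤ 2 * Fintype.card α + k) :
    ∃ D : Finset α, SemiPairedDom H D ∧ D.card ≤ k :=
  gp5_semiPairedDom_reverse_general H hiso k h
end

section
/- Let G be a graph with vertex set V = {v_1,...,v_n} and let G' be the split graph obtained as follows: G' has vertex set V_1 ∪ V_2 ∪ U_1 ∪ U_2 where V_k = {v_i^k : i ∈ [n]}, U_k = {u_i^k : i ∈ [n]}, the set V_1 ∪ U_1 is a clique, and for each i the vertex v_i^2 is adjacent to v_j^1 (and u_i^2 adjacent to u_j^1) exactly when v_j ∈ N_G[v_i]. Then G has a dominating set of cardinality at most k if and only if G' has a semipaired dominating set of cardinality at most 2k. -/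
open SimpleGraph Finset

/-- The split graph `G'` built from `G`: vertices `Sum.inl (Sum.inl i)` are `v_i^1`,
`Sum.inl (Sum.inr i)` are `u_i^1` (together a clique), `Sum.inr (Sum.inl i)` are `v_i^2`
and `Sum.inr (Sum.inr i)` are `u_i^2` (an independent set), with `v_i^2 v_j^1` and
`u_i^2 u_j^1` edges exactly when `v_j ∈ N_G[v_i]`. -/
def splitG {α : Type*} (G : SimpleGraph α) : SimpleGraph ((α ⊕ α) ⊕ (α ⊕ α)) :=
  SimpleGraph.fromRel (fun u v =>
    (∃ x y : α ⊕ α, u = Sum.inl x ∧ v = Sum.inl y) ∨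
    (∃ i j : α, u = Sum.inr (Sum.inl i) ∧ v = Sum.inl (Sum.inl j) ∧ (i = j ∨ G.Adj i j)) ∨
    (∃ i j : α, u = Sum.inr (Sum.inr i) ∧ v = Sum.inl (Sum.inr j) ∧ (i = j ∨ G.Adj i j)))

/-! The vertices `v_i^2` only see `v_j^1` with `v_j ∈ N_G[v_i]`, and likewise for the `u`'s, so
forgetting the levels of a dominating set of `G'` yields a dominating set of `G ⊕g G`; one of its
two halves has at most `k` vertices and dominates `G`. Conversely, the two copies of a dominating
set `D` of `G` placed in the clique dominate `G'`, and pairing `v_i^1` with `u_i^1` makes them a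
(semi)paired dominating set of size `2|D|`. -/

section

variable {V W : Type*}

theorem PairedDom.semiPairedDom {G : SimpleGraph V} {D : Finset V} (h : PairedDom G D) :
    SemiPairedDom G D := by
  obtain ⟨hdom, f, hmem, hinv, hne, hadj⟩ := h
  exact ⟨hdom, f, hmem, hinv, hne, fun u hu => Or.inl (hadj u hu)⟩

theorem Dominating.nonempty [Nonempty V] {G : SimpleGraph V} {D : Finset V}
    (h : Dominating G D) : D.Nonempty := by
  obtain ⟨u, hu, -⟩ := h (Classical.arbitrary V)
  exact ⟨u, hu⟩

theorem Dominating.disjSum {G : SimpleGraph V} {H : SimpleGraph W} {D : Finset V}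
    {E : Finset W} (hD : Dominating G D) (hE : Dominating H E) :
    Dominating (G ⊕g H) (D.disjSum E) := by
  rintro (v | w)
  · obtain ⟨u, hu, huv⟩ := hD v
    exact ⟨.inl u, inl_mem_disjSum.2 hu, by simpa using huv⟩
  · obtain ⟨u, hu, huw⟩ := hE w
    exact ⟨.inr u, inr_mem_disjSum.2 hu, by simpa using huw⟩

theorem Dominating.toLeft {G : SimpleGraph V} {H : SimpleGraph W} {D : Finset (V ⊕ W)}
    (h : Dominating (G ⊕g H) D) : Dominating G D.toLeft := by
  intro v
  obtain ⟨u | u, hu, huv⟩ := h (.inl v)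
  · exact ⟨u, mem_toLeft.2 hu, by simpa using huv⟩
  · simp at huv

theorem Dominating.toRight {G : SimpleGraph V} {H : SimpleGraph W} {D : Finset (V ⊕ W)}
    (h : Dominating (G ⊕g H) D) : Dominating H D.toRight := by
  intro w
  obtain ⟨u | u, hu, huw⟩ := h (.inr w)
  · simp at huw
  · exact ⟨u, mem_toRight.2 hu, by simpa using huw⟩

end

namespace splitG

variable {α : Type*} (G : SimpleGraph α)

theorem adj_inl_inl {x y : α ⊕ α} : (splitG G).Adj (.inl x) (.inl y) ↔ x ≠ y := by
  simp only [splitG, fromRel_adj, ne_eq, Sum.inl.injEq]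
  exact ⟨And.left, fun h => ⟨h, .inl (.inl ⟨x, y, rfl, rfl⟩)⟩⟩

theorem adj_inl_inr {x y : α ⊕ α} :
    (splitG G).Adj (.inl y) (.inr x) ↔ y = x ∨ (G ⊕g G).Adj y x := by
  rcases x with i | i <;> rcases y with j | j <;>
    simp [splitG, eq_comm, G.adj_comm]

theorem not_adj_inr_inr {x y : α ⊕ α} : ¬ (splitG G).Adj (.inr x) (.inr y) := by
  simp [splitG]

theorem dominating_map_inl_disjSum {D : Finset α} (hD : Dominating G D) :
    Dominating (splitG G) ((D.disjSum D).map .inl) := by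
  rintro (x | x)
  · have : Nonempty α := ⟨Sum.elim id id x⟩
    obtain ⟨y, hy⟩ := (hD.disjSum hD).nonempty
    refine ⟨.inl y, mem_map_of_mem _ hy, ?_⟩
    simpa [adj_inl_inl] using eq_or_ne y x
  · obtain ⟨y, hy, hyx⟩ := (hD.disjSum hD) x
    exact ⟨.inl y, mem_map_of_mem _ hy, .inr ((adj_inl_inr G).2 hyx)⟩

theorem pairedDom_map_inl_disjSum {D : Finset α} (hD : Dominating G D) :
    PairedDom (splitG G) ((D.disjSum D).map .inl) := by
  refine ⟨dominating_map_inl_disjSum G hD, Sum.map Sum.swap id, ?_, ?_, ?_, ?_⟩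
  all_goals
    simp only [mem_map, Function.Embedding.inl_apply]
    rintro _ ⟨x | x, hx, rfl⟩
  all_goals simp_all [adj_inl_inl]

theorem dominating_toLeft_union_toRight [DecidableEq α] {D : Finset ((α ⊕ α) ⊕ (α ⊕ α))}
    (h : Dominating (splitG G) D) : Dominating (G ⊕g G) (D.toLeft ∪ D.toRight) := by
  intro x
  obtain ⟨y | y, hy, hyx⟩ := h (.inr x)
  · exact ⟨y, mem_union_left _ (mem_toLeft.2 hy), by simpa [adj_inl_inr] using hyx⟩
  · refine ⟨y, mem_union_right _ (mem_toRight.2 hy), .inl ?_⟩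
    simpa [not_adj_inr_inr] using hyx

end splitG

theorem splitG_dom_iff_semiPairedDom_general {α : Type*}
    (G : SimpleGraph α) (k : ℕ) :
    (∃ D : Finset α, Dominating G D ∧ D.card ≤ k) ↔
    (∃ D' : Finset ((α ⊕ α) ⊕ (α ⊕ α)),
      SemiPairedDom (splitG G) D' ∧ D'.card ≤ 2 * k) := by
  constructor
  · rintro ⟨D, hD, hk⟩
    refine ⟨_, (splitG.pairedDom_map_inl_disjSum G hD).semiPairedDom, ?_⟩
    rw [card_map, card_disjSum]
    omega
  · rintro ⟨D', ⟨hdom, -⟩, hk⟩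
    classical
    set E := D'.toLeft ∪ D'.toRight
    have hE : Dominating (G ⊕g G) E := splitG.dominating_toLeft_union_toRight G hdom
    have hsplit : #E.toLeft + #E.toRight ≤ 2 * k := by
      rw [card_toLeft_add_card_toRight]
      calc #E ≤ #D'.toLeft + #D'.toRight := card_union_le _ _
        _ = #D' := card_toLeft_add_card_toRight
        _ ≤ 2 * k := hk
    by_cases hleft : #E.toLeft ≤ k
    · exact ⟨_, hE.toLeft, hleft⟩
    · exact ⟨_, hE.toRight, by omega⟩

/-- `G` (with at least two vertices) has a dominating set of cardinality at
most `k` iff the split graph `G'` has a semipaired dominating set of cardinality at most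
`2k`. -/
theorem splitG_dom_iff_semiPairedDom {α : Type*} [Fintype α] [DecidableEq α]
    (G : SimpleGraph α) (hcard : 1 < Fintype.card α) (k : ℕ) :
    (∃ D : Finset α, Dominating G D ∧ D.card ≤ k) ↔
    (∃ D' : Finset ((α ⊕ α) ⊕ (α ⊕ α)),
      SemiPairedDom (splitG G) D' ∧ D'.card ≤ 2 * k) :=
  splitG_dom_iff_semiPairedDom_general G k
end

section
/- In a block graph G equipped with a block-elimination ordering α = (v_1,...,v_n): if B and B' are two blocks of G with v_i ∈ V(B) ∩ V(B'), then F(u) = v_i for all u ∈ V(B) \ {v_i}, or F(u) = v_i for all u ∈ V(B') \ {v_i}, where F(v_j) is the neighbor of v_j of maximum index in α. -/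
open SimpleGraph

/-!
A vertex adjacent to two vertices of a block lies in that block: with any third vertex of
the block it closes a 4-cycle, whose chord extends the clique. Hence two distinct blocks
through `v` meet only in `v`. If some `u ∈ B \ {v}` has `F(u) ≠ v`, then `B` contains a
vertex above `v`: `u` itself, or else the later neighbour of `u`, which the elimination
ordering makes adjacent to `v`. If both `B` and `B'` contained vertices `t, t'` above `v`,
the ordering would make `t` and `t'` adjacent, putting `t'` into `B ∩ B'`.
-/

/-- A graph is a block graph iff the vertices of every cycle form a clique
(equivalently, every block is a clique). -/
def IsBlockGraph {V : Type*} (G : SimpleGraph V) : Prop :=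
  ∀ (u : V) (c : G.Walk u u), c.IsCycle → G.IsClique {v | v ∈ c.support}

/-- A block of a block graph, i.e. a maximal clique. -/
def IsBlock {V : Type*} (G : SimpleGraph V) (B : Set V) : Prop :=
  G.IsClique B ∧ ∀ C : Set V, G.IsClique C → B ⊆ C → B = C

variable {V : Type*} {G : SimpleGraph V}

def IsBlockEliminationOrdering [LinearOrder V] (G : SimpleGraph V) : Prop :=
  ∀ i j k : V, i < j → j < k → G.Adj i j → G.Adj i k → G.Adj j k

theorem IsBlockGraph.adj_of_cycle4 (hBG : IsBlockGraph G) {a b c d : V}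
    (hab : G.Adj a b) (hbc : G.Adj b c) (hcd : G.Adj c d) (hda : G.Adj d a)
    (hac : a ≠ c) (hbd : b ≠ d) : G.Adj a c := by
  have hcyc :
      (Walk.cons hab (Walk.cons hbc (Walk.cons hcd (Walk.cons hda Walk.nil)))).IsCycle := by
    rw [Walk.isCycle_def]
    refine ⟨?_, by simp, ?_⟩
    · simp [Walk.isTrail_def, hab.ne, hbc.ne, hcd.ne, hda.ne, hac, hbd, hac.symm, hab.ne',
        hda.ne']
    · simp [hbc.ne, hbd, hcd.ne, hac.symm, hda.ne, hab.ne']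
  exact hBG a _ hcyc (by simp) (by simp) hac

namespace IsBlock

variable {B B' : Set V}

theorem mem_of_adj_of_adj (hBG : IsBlockGraph G) (hB : IsBlock G B) {x y t : V}
    (hx : x ∈ B) (hy : y ∈ B) (hxy : x ≠ y) (hxt : G.Adj x t) (hyt : G.Adj y t) : t ∈ B := by
  have hclique : G.IsClique (insert t B) := by
    refine hB.1.insert fun b hb hbt => ?_
    by_cases hbx : b = x
    · exact hbx ▸ hxt.symm
    by_cases hby : b = y
    · exact hby ▸ hyt.symm
    exact (hBG.adj_of_cycle4 (hB.1 hb hx hbx) hxt hyt.symm (hB.1 hy hb (Ne.symm hby))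
      (Ne.symm hbt) hxy).symm
  rw [hB.2 _ hclique (Set.subset_insert t B)]
  exact Set.mem_insert t B

theorem eq_of_mem_inter (hBG : IsBlockGraph G) (hB : IsBlock G B) (hB' : IsBlock G B')
    (hne : B ≠ B') {v z : V} (hv : v ∈ B ∩ B') (hz : z ∈ B ∩ B') : z = v := by
  by_contra hzv
  refine hne (hB.2 B' hB'.1 fun x hx => ?_)
  by_cases hxv : x = v
  · exact hxv ▸ hv.2
  by_cases hxz : x = z
  · exact hxz ▸ hz.2
  exact hB'.mem_of_adj_of_adj hBG hv.2 hz.2 (Ne.symm hzv) (hB.1 hv.1 hx (Ne.symm hxv))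
    (hB.1 hz.1 hx (Ne.symm hxz))

theorem maxNeighbor_of_forall_mem_le [LinearOrder V] (hBG : IsBlockGraph G)
    (hBEO : IsBlockEliminationOrdering G) (hB : IsBlock G B) {v : V} (hvB : v ∈ B)
    (hle : ∀ t ∈ B, t ≤ v) :
    ∀ u ∈ B, u ≠ v → G.Adj u v ∧ ∀ w, G.Adj u w → w ≤ v := by
  intro u hu huv
  have hadj : G.Adj u v := hB.1 hu hvB huv
  refine ⟨hadj, fun w huw => le_of_not_gt fun hvw => ?_⟩
  have hvw_adj : G.Adj v w := hBEO u v w (lt_of_le_of_ne (hle u hu) huv) hvw hadj huw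
  exact (hle w (hB.mem_of_adj_of_adj hBG hu hvB huv huw hvw_adj)).not_gt hvw

theorem forall_mem_le_or_forall_mem_le [LinearOrder V] (hBG : IsBlockGraph G)
    (hBEO : IsBlockEliminationOrdering G) (hB : IsBlock G B) (hB' : IsBlock G B')
    (hne : B ≠ B') {v : V} (hv : v ∈ B ∩ B') : (∀ t ∈ B, t ≤ v) ∨ (∀ t ∈ B', t ≤ v) := by
  by_contra! ⟨⟨t, ht, hvt⟩, ⟨t', ht', hvt'⟩⟩
  have hadj : G.Adj v t := hB.1 hv.1 ht hvt.ne
  have hadj' : G.Adj v t' := hB'.1 hv.2 ht' hvt'.ne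
  have htt' : t ≠ t' := fun h => hvt.ne' (hB.eq_of_mem_inter hBG hB' hne hv ⟨ht, h ▸ ht'⟩)
  have htt'_adj : G.Adj t t' := by
    rcases htt'.lt_or_gt with h | h
    · exact hBEO v t t' hvt h hadj hadj'
    · exact (hBEO v t' t hvt' h hadj' hadj).symm
  have ht'B : t' ∈ B := hB.mem_of_adj_of_adj hBG hv.1 ht hvt.ne hadj' htt'_adj
  exact hvt'.ne' (hB.eq_of_mem_inter hBG hB' hne hv ⟨ht'B, ht'⟩)

end IsBlock

theorem blockGraph_BEO_maxNeighbor_general {n : ℕ} (G : SimpleGraph (Fin (n + 1)))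
    (hBG : IsBlockGraph G)
    (hBEO : ∀ i j k : Fin (n + 1), i < j → j < k → G.Adj i j → G.Adj i k → G.Adj j k)
    (B B' : Set (Fin (n + 1))) (hB : IsBlock G B) (hB' : IsBlock G B') (hne : B ≠ B')
    (v : Fin (n + 1)) (hv : v ∈ B ∩ B') :
    (∀ u ∈ B, u ≠ v → G.Adj u v ∧ ∀ w, G.Adj u w → w ≤ v) ∨
    (∀ u ∈ B', u ≠ v → G.Adj u v ∧ ∀ w, G.Adj u w → w ≤ v) :=
  (hB.forall_mem_le_or_forall_mem_le hBG hBEO hB' hne hv).imp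
    (hB.maxNeighbor_of_forall_mem_le hBG hBEO hv.1)
    (hB'.maxNeighbor_of_forall_mem_le hBG hBEO hv.2)

/-- In a block graph equipped with a block-elimination ordering
(`v_1, …, v_n` identified with `Fin (n+1)` in order), if `B` and `B'` are two distinct
blocks with `v ∈ B ∩ B'`, then every `u ∈ B \ {v}` has `v` as its highest-indexed
neighbor (`F(u) = v`), or every `u ∈ B' \ {v}` does. -/
theorem blockGraph_BEO_maxNeighbor {n : ℕ} (G : SimpleGraph (Fin (n + 1)))
    (hconn : G.Connected) (hBG : IsBlockGraph G)
    (hBEO : ∀ i j k : Fin (n + 1), i < j → j < k → G.Adj i j → G.Adj i k → G.Adj j k)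
    (B B' : Set (Fin (n + 1))) (hB : IsBlock G B) (hB' : IsBlock G B') (hne : B ≠ B')
    (v : Fin (n + 1)) (hv : v ∈ B ∩ B') :
    (∀ u ∈ B, u ≠ v → G.Adj u v ∧ ∀ w, G.Adj u w → w ≤ v) ∨
    (∀ u ∈ B', u ≠ v → G.Adj u v ∧ ∀ w, G.Adj u w → w ≤ v) :=
  blockGraph_BEO_maxNeighbor_general G hBG hBEO B B' hB hB' hne v hv
end

section
/- Let G be a block graph with block tree T(G), and let β = (v_1,...,v_n) be the reverse of a BFS ordering of T(G). If v_i v_j ∈ E(G) with j ≥ i, then N_i[v_i] ⊆ N_i[v_j], where N_i[v_k] = {v_k} ∪ {v_l : v_k v_l ∈ E(G), l ≥ i}. -/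
open SimpleGraph

/-!
Every vertex `u` reaches the root `v_n` by repeatedly passing to its parent `F u`, which is a
larger neighbour; so two later neighbours `v_j`, `v_l` of `v_i` are joined by a walk avoiding
`v_i`. Closing that walk through `v_i` gives a cycle, and in a block graph the vertices of a
cycle form a clique, so `v_j v_l ∈ E(G)`.
-/

namespace IsBlockGraph

variable {V : Type*} {G : SimpleGraph V}

theorem adj_of_walk_not_mem_support (hG : IsBlockGraph G) {a u w : V} (hu : G.Adj a u)
    (hw : G.Adj a w) (huw : u ≠ w) (p : G.Walk u w) (ha : a ∉ p.support) : G.Adj u w := by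
  classical
  let q := p.bypass
  have haq : a ∉ q.support := fun h => ha (p.support_bypass_subset_support h)
  have hcycle : (Walk.cons hu (q.concat hw.symm)).IsCycle := by
    refine (Walk.cons_isCycle_iff _ _).mpr ⟨p.bypass_isPath.concat haq hw.symm, ?_⟩
    rw [Walk.edges_concat, List.concat_eq_append, List.mem_append, List.mem_singleton]
    rintro (h | h)
    · exact haq (q.fst_mem_support_of_mem_edges h)
    · rcases Sym2.eq_iff.mp h with ⟨rfl, -⟩ | ⟨-, rfl⟩
      exacts [hw.ne rfl, huw rfl]
  exact hG a _ hcycle (by simp) (by simp) huw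

end IsBlockGraph

theorem SimpleGraph.exists_walk_support_ge {V : Type*} [LinearOrder V] [WellFoundedGT V]
    {G : SimpleGraph V} (r : V) (F : V → V) (hadj : ∀ u, u ≠ r → G.Adj u (F u))
    (hlt : ∀ u, u ≠ r → u < F u) (u : V) : ∃ p : G.Walk u r, ∀ v ∈ p.support, u ≤ v := by
  induction u using WellFoundedGT.induction with
  | _ u ih =>
    by_cases hu : u = r
    · subst hu
      exact ⟨Walk.nil, by simp⟩
    obtain ⟨p, hp⟩ := ih (F u) (hlt u hu)
    refine ⟨Walk.cons (hadj u hu) p, fun v hv => ?_⟩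
    rw [Walk.support_cons, List.mem_cons] at hv
    rcases hv with rfl | hv
    · exact le_rfl
    · exact (hlt u hu).le.trans (hp v hv)

theorem closedUpNeighborhood_subset_general {n : ℕ} (G : SimpleGraph (Fin (n + 1)))
    (hBG : IsBlockGraph G)
    (F : Fin (n + 1) → Fin (n + 1))
    (hF : ∀ u, u ≠ Fin.last n → G.Adj u (F u) ∧ ∀ w, G.Adj u w → w ≤ F u)
    (hparent : ∀ u, u ≠ Fin.last n → u < F u) :
    ∀ i j : Fin (n + 1), i ≤ j → G.Adj i j →
      ({i} ∪ {l | G.Adj i l ∧ i ≤ l} : Set (Fin (n + 1))) ⊆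
        {j} ∪ {l | G.Adj j l ∧ i ≤ l} := by
  intro i j hij hij_adj x hx
  rcases hx with rfl | ⟨hix_adj, hix⟩
  · exact Or.inr ⟨hij_adj.symm, le_rfl⟩
  by_cases hxj : x = j
  · exact Or.inl hxj
  refine Or.inr ⟨?_, hix⟩
  have hup := exists_walk_support_ge (G := G) (Fin.last n) F (fun u hu => (hF u hu).1) hparent
  obtain ⟨pj, hpj⟩ := hup j
  obtain ⟨px, hpx⟩ := hup x
  refine hBG.adj_of_walk_not_mem_support hij_adj hix_adj (Ne.symm hxj) (pj.append px.reverse) ?_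
  rw [Walk.mem_support_append_iff, Walk.support_reverse, List.mem_reverse]
  rintro (h | h)
  · exact (hij.lt_of_ne hij_adj.ne).not_ge (hpj i h)
  · exact (hix.lt_of_ne hix_adj.ne).not_ge (hpx i h)

/-- With `G` a block graph on `Fin (n+1)` and `(v_1, …, v_n)` the reverse
of a BFS ordering of the block tree `T(G)` (built from `F` as in the paper), if
`v_i v_j ∈ E(G)` with `i ≤ j` then `N_i[v_i] ⊆ N_i[v_j]`, where
`N_i[v_k] = {v_k} ∪ {v_l : v_k v_l ∈ E(G), l ≥ i}`. -/
theorem closedUpNeighborhood_subset {n : ℕ} (G : SimpleGraph (Fin (n + 1)))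
    (hconn : G.Connected) (hBG : IsBlockGraph G)
    (F : Fin (n + 1) → Fin (n + 1))
    (hFroot : F (Fin.last n) = Fin.last n)
    (hF : ∀ u, u ≠ Fin.last n → G.Adj u (F u) ∧ ∀ w, G.Adj u w → w ≤ F u)
    (hparent : ∀ u, u ≠ Fin.last n → u < F u)
    (hlevel : ∀ u v : Fin (n + 1), u ≤ v →
      (SimpleGraph.fromRel fun a b => F a = b).dist (Fin.last n) v ≤
        (SimpleGraph.fromRel fun a b => F a = b).dist (Fin.last n) u) :
    ∀ i j : Fin (n + 1), i ≤ j → G.Adj i j →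
      ({i} ∪ {l | G.Adj i l ∧ i ≤ l} : Set (Fin (n + 1))) ⊆
        {j} ∪ {l | G.Adj j l ∧ i ≤ l} :=
  closedUpNeighborhood_subset_general G hBG F hF hparent
end
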